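/- arXiv:2505.15109 — 3 statements merged into one kernel-verified Lean document; each statement's English description precedes it below -/
import Mathlib

section
/- (Proposition 3: log-concavity of volume in the UTPD parameterization) Let G1, G2 ∈ ℝ^{d×d} both be upper triangular with strictly positive diagonal entries, and let θ ∈ [0,1]. Then for any center c ∈ ℝ^d, the Lebesgue measure of the zonotope with generator matrix θ·G1 + (1−θ)·G2 satisfies vol(Z(c, θ·G1 + (1−θ)·G2)) ≥ vol(Z(c, G1))^θ · vol(Z(c, G2))^{1−θ}. -/
/-!
The zonotope `Z(c, G)` is a translate of the image of the cube `[-1, 1]^d` under `G`, so its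
volume is `2^d |det G|`, which for upper triangular `G` with nonnegative diagonal is
`∏ i, 2 G i i`. Upper triangular matrices form a convex cone on which the diagonal is linear,
so log-concavity of the volume reduces to the weighted AM–GM inequality
`a^θ b^(1-θ) ≤ θ a + (1-θ) b` for each diagonal entry.
-/

open MeasureTheory
open Pointwise

/-- The zonotope with center `c` and generator matrix `G`. -/
def zonotope {d p : ℕ} (c : Fin d → ℝ) (G : Matrix (Fin d) (Fin p) ℝ) : Set (Fin d → ℝ) :=
  {x | ∃ lam : Fin p → ℝ, (∀ i, |lam i| ≤ 1) ∧ x = c + G.mulVec lam}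

theorem zonotope_eq_vadd_image {d p : ℕ} (c : Fin d → ℝ) (G : Matrix (Fin d) (Fin p) ℝ) :
    zonotope c G = c +ᵥ (Matrix.toLin' G '' Set.univ.pi fun _ => Set.Icc (-1) 1) := by
  ext x
  simp only [zonotope, Set.mem_ofPred_eq, Set.mem_vadd_set, Set.mem_image, Set.mem_univ_pi,
    Set.mem_Icc, ← abs_le, Matrix.toLin'_apply, vadd_eq_add]
  constructor
  · rintro ⟨lam, hlam, rfl⟩
    exact ⟨_, ⟨lam, hlam, rfl⟩, rfl⟩
  · rintro ⟨_, ⟨lam, hlam, rfl⟩, rfl⟩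
    exact ⟨lam, hlam, rfl⟩

theorem volume_zonotope {d : ℕ} (c : Fin d → ℝ) (G : Matrix (Fin d) (Fin d) ℝ) :
    volume (zonotope c G) = ENNReal.ofReal |G.det| * 2 ^ d := by
  rw [zonotope_eq_vadd_image, measure_vadd, Measure.addHaar_image_linearMap,
    LinearMap.det_toLin', volume_pi_pi]
  norm_num [Real.volume_Icc]

theorem volume_zonotope_of_isUpperTriangular {d : ℕ} (c : Fin d → ℝ)
    {G : Matrix (Fin d) (Fin d) ℝ} (hG : G.IsUpperTriangular) (hdiag : ∀ i, 0 ≤ G i i) :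
    volume (zonotope c G) = ENNReal.ofReal (∏ i, 2 * G i i) := by
  rw [volume_zonotope, Matrix.det_of_isUpperTriangular hG,
    abs_of_nonneg (Finset.prod_nonneg fun i _ => hdiag i), Finset.prod_mul_distrib,
    ENNReal.ofReal_mul (by positivity)]
  simp [mul_comm]

theorem Matrix.BlockTriangular.smul {m α R S : Type*} [LT α] [Zero R] [SMulZeroClass S R]
    {M : Matrix m m R} {b : m → α} (hM : M.BlockTriangular b) (r : S) :
    (r • M).BlockTriangular b :=
  fun _ _ h => by rw [Matrix.smul_apply, hM h, smul_zero]

theorem Real.prod_rpow_mul_prod_rpow_le_prod_add {ι : Type*} (s : Finset ι)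
    {a b : ι → ℝ} (ha : ∀ i ∈ s, 0 ≤ a i) (hb : ∀ i ∈ s, 0 ≤ b i) {θ : ℝ} (hθ0 : 0 ≤ θ)
    (hθ1 : θ ≤ 1) :
    (∏ i ∈ s, a i) ^ θ * (∏ i ∈ s, b i) ^ (1 - θ) ≤ ∏ i ∈ s, (θ * a i + (1 - θ) * b i) := by
  rw [← Real.finsetProd_rpow s a ha, ← Real.finsetProd_rpow s b hb,
    ← Finset.prod_mul_distrib]
  exact Finset.prod_le_prod (fun i hi => by have := ha i hi; have := hb i hi; positivity)
    fun i hi => Real.geom_mean_le_arith_mean2_weighted hθ0 (by linarith) (ha i hi) (hb i hi)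
      (by ring)

theorem ENNReal.ofReal_rpow_mul_ofReal_rpow_le {a b c θ : ℝ} (ha : 0 ≤ a) (hb : 0 ≤ b)
    (hθ0 : 0 ≤ θ) (hθ1 : θ ≤ 1) (h : a ^ θ * b ^ (1 - θ) ≤ c) :
    ENNReal.ofReal a ^ θ * ENNReal.ofReal b ^ (1 - θ) ≤ ENNReal.ofReal c := by
  rw [ENNReal.ofReal_rpow_of_nonneg ha hθ0, ENNReal.ofReal_rpow_of_nonneg hb (by linarith),
    ← ENNReal.ofReal_mul (by positivity)]
  exact ENNReal.ofReal_le_ofReal h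

/-- Proposition 3: log-concavity of the zonotope volume in the UTPD parameterization.
For upper triangular matrices `G1, G2` with strictly positive diagonals and `θ ∈ [0,1]`,
`vol(Z(c, θ G1 + (1−θ) G2)) ≥ vol(Z(c,G1))^θ · vol(Z(c,G2))^(1−θ)`. -/
theorem utpd_volume_log_concave (d : ℕ) (c : Fin d → ℝ)
    (G1 G2 : Matrix (Fin d) (Fin d) ℝ)
    (hut1 : ∀ i j : Fin d, j < i → G1 i j = 0) (hdiag1 : ∀ i : Fin d, 0 < G1 i i)
    (hut2 : ∀ i j : Fin d, j < i → G2 i j = 0) (hdiag2 : ∀ i : Fin d, 0 < G2 i i)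
    (θ : ℝ) (hθ0 : 0 ≤ θ) (hθ1 : θ ≤ 1) :
    volume (zonotope c (θ • G1 + (1 - θ) • G2))
      ≥ volume (zonotope c G1) ^ θ * volume (zonotope c G2) ^ (1 - θ) := by
  have hG1 : G1.IsUpperTriangular := hut1
  have hG2 : G2.IsUpperTriangular := hut2
  have h2G1 (i : Fin d) : 0 ≤ 2 * G1 i i := by linarith [hdiag1 i]
  have h2G2 (i : Fin d) : 0 ≤ 2 * G2 i i := by linarith [hdiag2 i]
  have hdiag (i : Fin d) : (θ • G1 + (1 - θ) • G2) i i = θ * G1 i i + (1 - θ) * G2 i i := rfl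
  have hdiag_nonneg (i : Fin d) : 0 ≤ (θ • G1 + (1 - θ) • G2) i i := by
    have := (hdiag1 i).le; have := (hdiag2 i).le; have : 0 ≤ 1 - θ := by linarith
    rw [hdiag]; positivity
  rw [ge_iff_le, volume_zonotope_of_isUpperTriangular c hG1 fun i => (hdiag1 i).le,
    volume_zonotope_of_isUpperTriangular c hG2 fun i => (hdiag2 i).le,
    volume_zonotope_of_isUpperTriangular c ((hG1.smul θ).add (hG2.smul (1 - θ))) hdiag_nonneg]
  refine ENNReal.ofReal_rpow_mul_ofReal_rpow_le (Finset.prod_nonneg fun i _ => h2G1 i)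
    (Finset.prod_nonneg fun i _ => h2G2 i) hθ0 hθ1 ?_
  calc (∏ i, 2 * G1 i i) ^ θ * (∏ i, 2 * G2 i i) ^ (1 - θ)
      ≤ ∏ i, (θ * (2 * G1 i i) + (1 - θ) * (2 * G2 i i)) :=
        Real.prod_rpow_mul_prod_rpow_le_prod_add _ (fun i _ => h2G1 i) (fun i _ => h2G2 i)
          hθ0 hθ1
    _ = ∏ i, 2 * (θ • G1 + (1 - θ) • G2) i i :=
        Finset.prod_congr rfl fun i _ => by rw [hdiag]; ring
end

section
/- (Proposition 4: log-concavity of volume in the SFG parameterization) Fix G ∈ ℝ^{d×p} and c ∈ ℝ^d. For γ ∈ ℝ^p with nonnegative entries, let Z_γ = {c + G μ : μ ∈ ℝ^p, |μ_i| ≤ γ_i for all i}. Then for any γ1, γ2 ∈ ℝ^p with nonnegative entries and any θ ∈ [0,1], the Lebesgue measure satisfies vol(Z_{θ·γ1 + (1−θ)·γ2}) ≥ vol(Z_{γ1})^θ · vol(Z_{γ2})^{1−θ}. -/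
open MeasureTheory

/-- In the SFG parameterization, `Z_γ = {c + G μ : |μ_i| ≤ γ_i for all i}`. -/
def sfgZonotope {d p : ℕ} (c : Fin d → ℝ) (G : Matrix (Fin d) (Fin p) ℝ)
    (γ : Fin p → ℝ) : Set (Fin d → ℝ) :=
  {x | ∃ μ : Fin p → ℝ, (∀ i, |μ i| ≤ γ i) ∧ x = c + G.mulVec μ}

open Set Pointwise
open scoped ENNReal NNReal

lemma vol_translate (a : ℝ) (s : Set ℝ) : volume ((fun x => x + a) '' s) = volume s := by
  rw [Set.image_add_right, measure_preimage_add_right]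

/-- 1-D Brunn–Minkowski for compact sets. -/
lemma oneD_compact {K L : Set ℝ} (hK : IsCompact K) (hL : IsCompact L)
    (hKne : K.Nonempty) (hLne : L.Nonempty) :
    volume K + volume L ≤ volume (K + L) := by
  set k := sSup K with hk
  set l := sInf L with hl
  have hkK : k ∈ K := hK.sSup_mem hKne
  have hlL : l ∈ L := hL.sInf_mem hLne
  set X := (fun x => x + l) '' K with hXdef
  set Y := (fun x => x + k) '' L with hYdef
  have hXsub : X ⊆ K + L := by
    rintro x ⟨a, haK, rfl⟩; exact Set.add_mem_add haK hlL
  have hYsub : Y ⊆ K + L := by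
    rintro x ⟨b, hbL, rfl⟩
    have : k + b ∈ K + L := Set.add_mem_add hkK hbL
    simpa [add_comm] using this
  have hXvol : volume X = volume K := vol_translate l K
  have hYvol : volume Y = volume L := vol_translate k L
  have hYmeas : MeasurableSet Y :=
    ((hL.image (continuous_id.add continuous_const)).isClosed).measurableSet
  have hinter : X ∩ Y ⊆ {k + l} := by
    rintro x ⟨⟨a, haK, rfl⟩, ⟨b, hbL, hx⟩⟩
    have h1 : a ≤ k := le_csSup hK.bddAbove haK
    have h2 : l ≤ b := csInf_le hL.bddBelow hbL
    have : b + k = a + l := hx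
    simp only [Set.mem_singleton_iff]
    linarith
  have h0 : volume (X ∩ Y) = 0 :=
    le_antisymm (le_trans (measure_mono hinter) (by simp)) zero_le
  calc volume K + volume L = volume X + volume Y := by rw [hXvol, hYvol]
    _ = volume (X ∪ Y) + volume (X ∩ Y) := (measure_union_add_inter X hYmeas).symm
    _ = volume (X ∪ Y) := by rw [h0, add_zero]
    _ ≤ volume (K + L) := measure_mono (Set.union_subset hXsub hYsub)

lemma smul_vol (r : ℝ) (hr : 0 ≤ r) (s : Set ℝ) :
    volume (r • s) = ENNReal.ofReal r * volume s := by
  rw [Measure.addHaar_smul]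
  simp [abs_of_nonneg hr]

/-- 1-D combined-dilates Brunn–Minkowski lower bound via inner regularity. -/
lemma oneD_sets {θ : ℝ} (hθ0 : 0 < θ) (hθ1 : θ < 1) {U V W : Set ℝ}
    (hU : MeasurableSet U) (hV : MeasurableSet V)
    (hUne : U.Nonempty) (hVne : V.Nonempty)
    (hsub : θ • U + (1 - θ) • V ⊆ W) :
    ENNReal.ofReal θ * volume U + ENNReal.ofReal (1 - θ) * volume V ≤ volume W := by
  obtain ⟨u, hu⟩ := hUne
  obtain ⟨v, hv⟩ := hVne
  let ι := {K : Set ℝ // K ⊆ U ∧ IsCompact K ∧ K.Nonempty}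
  let κ := {L : Set ℝ // L ⊆ V ∧ IsCompact L ∧ L.Nonempty}
  have hι : Nonempty ι := ⟨⟨{u}, by simpa using hu, isCompact_singleton, ⟨u, rfl⟩⟩⟩
  have hκ : Nonempty κ := ⟨⟨{v}, by simpa using hv, isCompact_singleton, ⟨v, rfl⟩⟩⟩
  have hUsup : volume U = ⨆ K : ι, volume K.1 := by
    rw [hU.measure_eq_iSup_isCompact]
    apply le_antisymm
    · refine iSup_le fun K => iSup_le fun hKU => iSup_le fun hKc => ?_
      refine le_trans (measure_mono Set.subset_union_left)
        (le_iSup (fun K : ι => volume K.1)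
        ⟨K ∪ {u}, Set.union_subset hKU (by simpa using hu),
          hKc.union isCompact_singleton, ⟨u, Or.inr rfl⟩⟩)
    · exact iSup_le fun K =>
        le_iSup_of_le K.1 <| le_iSup_of_le K.2.1 <| le_iSup_of_le K.2.2.1 le_rfl
  have hVsup : volume V = ⨆ L : κ, volume L.1 := by
    rw [hV.measure_eq_iSup_isCompact]
    apply le_antisymm
    · refine iSup_le fun L => iSup_le fun hLV => iSup_le fun hLc => ?_
      refine le_trans (measure_mono Set.subset_union_left)
        (le_iSup (fun L : κ => volume L.1)
        ⟨L ∪ {v}, Set.union_subset hLV (by simpa using hv),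
          hLc.union isCompact_singleton, ⟨v, Or.inr rfl⟩⟩)
    · exact iSup_le fun L =>
        le_iSup_of_le L.1 <| le_iSup_of_le L.2.1 <| le_iSup_of_le L.2.2.1 le_rfl
  rw [hUsup, hVsup, ENNReal.mul_iSup, ENNReal.mul_iSup]
  refine ENNReal.iSup_add_iSup_le fun K L => ?_
  obtain ⟨hKU, hKc, hKne⟩ := K.2
  obtain ⟨hLV, hLc, hLne⟩ := L.2
  calc ENNReal.ofReal θ * volume K.1 + ENNReal.ofReal (1 - θ) * volume L.1
      = volume (θ • K.1) + volume ((1 - θ) • L.1) := by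
        rw [smul_vol θ hθ0.le, smul_vol (1 - θ) (by linarith)]
    _ ≤ volume (θ • K.1 + (1 - θ) • L.1) :=
        oneD_compact (hKc.smul θ) (hLc.smul (1 - θ))
          (hKne.smul_set) (hLne.smul_set)
    _ ≤ volume W := measure_mono <| le_trans
        (add_subset_add (smul_set_mono hKU) (smul_set_mono hLV)) hsub

/-- ENNReal weighted AM–GM for two terms. -/
lemma ennreal_amgm {θ : ℝ} (hθ0 : 0 < θ) (hθ1 : θ < 1) (x y : ℝ≥0∞) :
    x ^ θ * y ^ (1 - θ) ≤ ENNReal.ofReal θ * x + ENNReal.ofReal (1 - θ) * y := by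
  have h1θ : (0:ℝ) < 1 - θ := by linarith
  rcases eq_or_ne x ∞ with rfl | hx
  · rcases eq_or_ne y 0 with rfl | hy
    · simp [ENNReal.zero_rpow_of_pos h1θ]
    · have : (∞ : ℝ≥0∞) ^ θ = ∞ := ENNReal.top_rpow_of_pos hθ0
      rw [this]
      have hyp : y ^ (1 - θ) ≠ 0 := by
        rw [Ne, ENNReal.rpow_eq_zero_iff]
        rintro (⟨h0, _⟩ | ⟨_, hneg⟩)
        exacts [hy h0, absurd hneg (not_lt.mpr h1θ.le)]
      rw [ENNReal.top_mul hyp]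
      have : ENNReal.ofReal θ * ∞ = ∞ := by
        rw [ENNReal.mul_top (by simp; linarith)]
      simp [this]
  rcases eq_or_ne y ∞ with rfl | hy
  · rcases eq_or_ne x 0 with rfl | hx0
    · simp [ENNReal.zero_rpow_of_pos hθ0]
    · have : (∞ : ℝ≥0∞) ^ (1 - θ) = ∞ := ENNReal.top_rpow_of_pos h1θ
      rw [this]
      have hxp : x ^ θ ≠ 0 := by
        rw [Ne, ENNReal.rpow_eq_zero_iff]
        rintro (⟨h0, _⟩ | ⟨_, hneg⟩)
        exacts [hx0 h0, absurd hneg (not_lt.mpr hθ0.le)]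
      rw [ENNReal.mul_top hxp]
      have : ENNReal.ofReal (1 - θ) * ∞ = ∞ := by
        rw [ENNReal.mul_top (by simp; linarith)]
      simp [this]
  · lift x to ℝ≥0 using hx
    lift y to ℝ≥0 using hy
    have key := NNReal.geom_mean_le_arith_mean2_weighted
      (w₁ := ⟨θ, hθ0.le⟩) (w₂ := ⟨1 - θ, h1θ.le⟩) (p₁ := x) (p₂ := y)
      (by apply Subtype.ext; show θ + (1 - θ) = 1; ring)
    have hθc : (⟨θ, hθ0.le⟩ : ℝ≥0) = Real.toNNReal θ := by ext; simp [hθ0.le]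
    have h1θc : (⟨1 - θ, h1θ.le⟩ : ℝ≥0) = Real.toNNReal (1 - θ) := by ext; simp [h1θ.le]
    calc (x:ℝ≥0∞) ^ θ * (y:ℝ≥0∞) ^ (1 - θ)
        = ((x ^ θ * y ^ (1-θ) : ℝ≥0) : ℝ≥0∞) := by
          rw [ENNReal.coe_mul, ENNReal.coe_rpow_of_nonneg _ hθ0.le,
            ENNReal.coe_rpow_of_nonneg _ h1θ.le]
      _ ≤ ((⟨θ, hθ0.le⟩ * x + ⟨1 - θ, h1θ.le⟩ * y : ℝ≥0) : ℝ≥0∞) := by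
          exact_mod_cast ENNReal.coe_le_coe.mpr key
      _ = ENNReal.ofReal θ * x + ENNReal.ofReal (1 - θ) * y := by
          rw [ENNReal.coe_add]; erw [ENNReal.coe_mul, ENNReal.coe_mul, hθc, h1θc]
          rfl

/-- One-dimensional Prékopa–Leindler inequality (for bounded measurable data). -/
lemma PL1 {θ : ℝ} (hθ0 : 0 < θ) (hθ1 : θ < 1)
    (f g h : ℝ → ℝ) (hf : Measurable f) (hg : Measurable g) (hh : Measurable h)
    (hf0 : ∀ s, 0 ≤ f s) (hg0 : ∀ s, 0 ≤ g s) (hh0 : ∀ s, 0 ≤ h s)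
    (hfb : BddAbove (Set.range f)) (hgb : BddAbove (Set.range g))
    (key : ∀ s t, f s ^ θ * g t ^ (1 - θ) ≤ h (θ * s + (1 - θ) * t)) :
    (∫⁻ s, ENNReal.ofReal (f s)) ^ θ * (∫⁻ t, ENNReal.ofReal (g t)) ^ (1 - θ)
      ≤ ∫⁻ u, ENNReal.ofReal (h u) := by
  have h1θ : (0:ℝ) < 1 - θ := by linarith
  set α := ⨆ s, f s with hα_def
  set β := ⨆ t, g t with hβ_def
  rcases le_or_gt α 0 with hα | hα
  · -- f is identically zero
    have hf_zero : ∀ s, f s = 0 := fun s =>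
      le_antisymm (le_trans (le_ciSup hfb s) hα) (hf0 s)
    have : (∫⁻ s, ENNReal.ofReal (f s)) = 0 := by simp [hf_zero]
    rw [this, ENNReal.zero_rpow_of_pos hθ0, zero_mul]
    exact zero_le
  rcases le_or_gt β 0 with hβ | hβ
  · have hg_zero : ∀ t, g t = 0 := fun t =>
      le_antisymm (le_trans (le_ciSup hgb t) hβ) (hg0 t)
    have : (∫⁻ t, ENNReal.ofReal (g t)) = 0 := by simp [hg_zero]
    rw [this, ENNReal.zero_rpow_of_pos h1θ, mul_zero]
    exact zero_le
  -- main case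
  set D := α ^ θ * β ^ (1 - θ) with hD_def
  have hD : 0 < D := mul_pos (Real.rpow_pos_of_pos hα θ) (Real.rpow_pos_of_pos hβ (1 - θ))
  set f' := fun s => f s / α with hf'_def
  set g' := fun t => g t / β with hg'_def
  set h' := fun u => h u / D with hh'_def
  have hf'0 : ∀ s, 0 ≤ f' s := fun s => div_nonneg (hf0 s) hα.le
  have hg'0 : ∀ t, 0 ≤ g' t := fun t => div_nonneg (hg0 t) hβ.le
  have hh'0 : ∀ u, 0 ≤ h' u := fun u => div_nonneg (hh0 u) hD.le
  have hf'm : Measurable f' := hf.div_const α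
  have hg'm : Measurable g' := hg.div_const β
  have hh'm : Measurable h' := hh.div_const D
  have hf'le : ∀ s, f' s ≤ 1 := fun s => (div_le_one hα).mpr (le_ciSup hfb s)
  have hg'le : ∀ t, g' t ≤ 1 := fun t => (div_le_one hβ).mpr (le_ciSup hgb t)
  have key' : ∀ s t, f' s ^ θ * g' t ^ (1 - θ) ≤ h' (θ * s + (1 - θ) * t) := by
    intro s t
    rw [hf'_def, hg'_def, hh'_def]
    simp only
    rw [Real.div_rpow (hf0 s) hα.le, Real.div_rpow (hg0 t) hβ.le, div_mul_div_comm]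
    rw [← hD_def]
    exact div_le_div_of_nonneg_right (key s t) hD.le
  -- level-set inequality
  have level : ∀ lam : ℝ, lam ∈ Set.Ioo (0:ℝ) 1 →
      ENNReal.ofReal θ * volume {s | lam < f' s} + ENNReal.ofReal (1 - θ) * volume {t | lam < g' t}
        ≤ volume {u | lam < h' u} := by
    rintro lam ⟨hlam0, hlam1⟩
    have hU : MeasurableSet {s | lam < f' s} := measurableSet_lt measurable_const hf'm
    have hV : MeasurableSet {t | lam < g' t} := measurableSet_lt measurable_const hg'm
    have hUne : {s | lam < f' s}.Nonempty := by
      have : lam * α < ⨆ s, f s := by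
        calc lam * α < 1 * α := by nlinarith
          _ = α := one_mul α
      obtain ⟨s, hs⟩ := exists_lt_of_lt_ciSup this
      exact ⟨s, by rw [Set.mem_setOf_eq, hf'_def]; simp only; rw [lt_div_iff₀ hα]; linarith⟩
    have hVne : {t | lam < g' t}.Nonempty := by
      have : lam * β < ⨆ t, g t := by
        calc lam * β < 1 * β := by nlinarith
          _ = β := one_mul β
      obtain ⟨t, ht⟩ := exists_lt_of_lt_ciSup this
      exact ⟨t, by rw [Set.mem_setOf_eq, hg'_def]; simp only; rw [lt_div_iff₀ hβ]; linarith⟩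
    refine oneD_sets hθ0 hθ1 hU hV hUne hVne ?_
    rintro x ⟨a, ha, b, hb, rfl⟩
    obtain ⟨s, hsU, rfl⟩ := ha
    obtain ⟨t, htV, rfl⟩ := hb
    rw [Set.mem_setOf_eq] at hsU htV ⊢
    have step1 : lam ^ θ < f' s ^ θ := Real.rpow_lt_rpow hlam0.le hsU hθ0
    have step2 : lam ^ (1 - θ) < g' t ^ (1 - θ) := Real.rpow_lt_rpow hlam0.le htV h1θ
    have step3 : lam ^ θ * lam ^ (1 - θ) < f' s ^ θ * g' t ^ (1 - θ) :=
      mul_lt_mul'' step1 step2 (Real.rpow_nonneg hlam0.le θ) (Real.rpow_nonneg hlam0.le (1 - θ))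
    have step4 : lam ^ θ * lam ^ (1 - θ) = lam := by
      rw [← Real.rpow_add hlam0]
      norm_num
    have := key' s t
    have hsm : (θ • s + (1 - θ) • t : ℝ) = θ * s + (1 - θ) * t := by
      simp [smul_eq_mul]
    simp only [smul_eq_mul]
    calc lam = lam ^ θ * lam ^ (1 - θ) := step4.symm
      _ < f' s ^ θ * g' t ^ (1 - θ) := step3
      _ ≤ h' (θ * s + (1 - θ) * t) := key' s t
  -- layer cake
  have LCf : (∫⁻ s, ENNReal.ofReal (f' s)) = ∫⁻ t in Set.Ioi (0:ℝ), volume {s | t < f' s} :=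
    lintegral_eq_lintegral_meas_lt volume (ae_of_all _ hf'0) hf'm.aemeasurable
  have LCg : (∫⁻ t, ENNReal.ofReal (g' t)) = ∫⁻ lam in Set.Ioi (0:ℝ), volume {t | lam < g' t} :=
    lintegral_eq_lintegral_meas_lt volume (ae_of_all _ hg'0) hg'm.aemeasurable
  have LCh : (∫⁻ u, ENNReal.ofReal (h' u)) = ∫⁻ lam in Set.Ioi (0:ℝ), volume {u | lam < h' u} :=
    lintegral_eq_lintegral_meas_lt volume (ae_of_all _ hh'0) hh'm.aemeasurable
  have Ff_anti : Antitone (fun lam : ℝ => volume {s | lam < f' s}) := by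
    intro t1 t2 h12
    exact measure_mono (fun s hs => lt_of_le_of_lt h12 hs)
  have Fg_anti : Antitone (fun lam : ℝ => volume {t | lam < g' t}) := by
    intro t1 t2 h12
    exact measure_mono (fun s hs => lt_of_le_of_lt h12 hs)
  have Fh_anti : Antitone (fun lam : ℝ => volume {u | lam < h' u}) := by
    intro t1 t2 h12
    exact measure_mono (fun s hs => lt_of_le_of_lt h12 hs)
  have main' : ENNReal.ofReal θ * (∫⁻ s, ENNReal.ofReal (f' s))
      + ENNReal.ofReal (1 - θ) * (∫⁻ t, ENNReal.ofReal (g' t))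
      ≤ ∫⁻ u, ENNReal.ofReal (h' u) := by
    rw [LCf, LCg, LCh, ← lintegral_const_mul _ Ff_anti.measurable,
      ← lintegral_const_mul _ Fg_anti.measurable,
      ← lintegral_add_left (Ff_anti.measurable.const_mul _)]
    refine setLIntegral_mono Fh_anti.measurable ?_
    intro lam hlam
    rcases lt_or_ge lam 1 with hlt | hge
    · exact level lam ⟨hlam, hlt⟩
    · have e1 : {s | lam < f' s} = ∅ := by
        ext s; simp only [Set.mem_setOf_eq, Set.mem_empty_iff_false, iff_false, not_lt]
        exact le_trans (hf'le s) hge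
      have e2 : {t | lam < g' t} = ∅ := by
        ext t; simp only [Set.mem_setOf_eq, Set.mem_empty_iff_false, iff_false, not_lt]
        exact le_trans (hg'le t) hge
      simp [e1, e2]
  have amgm := ennreal_amgm hθ0 hθ1 (∫⁻ s, ENNReal.ofReal (f' s)) (∫⁻ t, ENNReal.ofReal (g' t))
  have main : (∫⁻ s, ENNReal.ofReal (f' s)) ^ θ * (∫⁻ t, ENNReal.ofReal (g' t)) ^ (1 - θ)
      ≤ ∫⁻ u, ENNReal.ofReal (h' u) := le_trans amgm main'
  -- unnormalize
  have IFeq : (∫⁻ s, ENNReal.ofReal (f s)) = (∫⁻ s, ENNReal.ofReal (f' s)) * ENNReal.ofReal α := by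
    rw [← lintegral_mul_const _ hf'm.ennreal_ofReal]
    congr 1; funext s
    rw [← ENNReal.ofReal_mul (hf'0 s), hf'_def]
    simp only
    rw [div_mul_cancel₀ _ hα.ne']
  have IGeq : (∫⁻ t, ENNReal.ofReal (g t)) = (∫⁻ t, ENNReal.ofReal (g' t)) * ENNReal.ofReal β := by
    rw [← lintegral_mul_const _ hg'm.ennreal_ofReal]
    congr 1; funext t
    rw [← ENNReal.ofReal_mul (hg'0 t), hg'_def]
    simp only
    rw [div_mul_cancel₀ _ hβ.ne']
  have IHeq : (∫⁻ u, ENNReal.ofReal (h u)) = (∫⁻ u, ENNReal.ofReal (h' u)) * ENNReal.ofReal D := by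
    rw [← lintegral_mul_const _ hh'm.ennreal_ofReal]
    congr 1; funext u
    rw [← ENNReal.ofReal_mul (hh'0 u), hh'_def]
    simp only
    rw [div_mul_cancel₀ _ hD.ne']
  have hDof : ENNReal.ofReal D = ENNReal.ofReal α ^ θ * ENNReal.ofReal β ^ (1 - θ) := by
    rw [hD_def, ENNReal.ofReal_mul (Real.rpow_nonneg hα.le θ),
      ENNReal.ofReal_rpow_of_pos hα, ENNReal.ofReal_rpow_of_pos hβ]
  rw [IFeq, IGeq, IHeq, ENNReal.mul_rpow_of_nonneg _ _ hθ0.le,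
    ENNReal.mul_rpow_of_nonneg _ _ h1θ.le, hDof]
  calc (∫⁻ s, ENNReal.ofReal (f' s)) ^ θ * ENNReal.ofReal α ^ θ
        * ((∫⁻ t, ENNReal.ofReal (g' t)) ^ (1 - θ) * ENNReal.ofReal β ^ (1 - θ))
      = (∫⁻ s, ENNReal.ofReal (f' s)) ^ θ * (∫⁻ t, ENNReal.ofReal (g' t)) ^ (1 - θ)
        * (ENNReal.ofReal α ^ θ * ENNReal.ofReal β ^ (1 - θ)) := by ring
    _ ≤ (∫⁻ u, ENNReal.ofReal (h' u)) * (ENNReal.ofReal α ^ θ * ENNReal.ofReal β ^ (1 - θ)) :=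
        mul_le_mul_left main _

/-- Multiplicative Brunn–Minkowski property in dimension `n`. -/
def BM (n : ℕ) : Prop :=
  ∀ (A B : Set (Fin n → ℝ)), IsCompact A → IsCompact B → A.Nonempty → B.Nonempty →
    ∀ θ : ℝ, 0 < θ → θ < 1 →
      volume A ^ θ * volume B ^ (1 - θ) ≤ volume (θ • A + (1 - θ) • B)

lemma BM_zero : BM 0 := by
  intro A B hA hB hAne hBne θ hθ0 hθ1
  have hsub : Subsingleton (Fin 0 → ℝ) := ⟨fun a b => funext fun i => i.elim0⟩
  have hvol_univ : volume (Set.univ : Set (Fin 0 → ℝ)) = 1 := by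
    rw [MeasureTheory.volume_pi, Measure.pi_univ]
    simp
  have eq_univ : ∀ (S : Set (Fin 0 → ℝ)), S.Nonempty → S = Set.univ := by
    rintro S ⟨x, hx⟩
    ext y
    simp only [Set.mem_univ, iff_true]
    rwa [Subsingleton.elim y x]
  have hCne : (θ • A + (1 - θ) • B).Nonempty := by
    obtain ⟨a, ha⟩ := hAne; obtain ⟨b, hb⟩ := hBne
    exact ⟨θ • a + (1 - θ) • b, Set.add_mem_add (Set.smul_mem_smul_set ha)
      (Set.smul_mem_smul_set hb)⟩
  rw [eq_univ _ hCne, eq_univ A hAne, eq_univ B hBne, hvol_univ]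
  simp

/-- Slices of compact sets in a product are compact. -/
lemma slice_compact {E : Type*} [TopologicalSpace E] [T2Space E] {A : Set (ℝ × E)} (hA : IsCompact A)
    (s : ℝ) : IsCompact (Prod.mk s ⁻¹' A) := by
  refine IsCompact.of_isClosed_subset (hA.image continuous_snd)
    (hA.isClosed.preimage (Continuous.prodMk_right s)) ?_
  intro y hy
  exact ⟨(s, y), hy, rfl⟩

/-- The product induction step. -/
lemma BM_step (n : ℕ) (ih : BM n) (A B : Set (ℝ × (Fin n → ℝ)))
    (hA : IsCompact A) (hB : IsCompact B) (hAne : A.Nonempty) (hBne : B.Nonempty)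
    (θ : ℝ) (hθ0 : 0 < θ) (hθ1 : θ < 1) :
    volume A ^ θ * volume B ^ (1 - θ) ≤ volume (θ • A + (1 - θ) • B) := by
  have h1θ : (0:ℝ) < 1 - θ := by linarith
  set C := θ • A + (1 - θ) • B with hC_def
  have hC : IsCompact C := (hA.smul θ).add (hB.smul (1 - θ))
  have hAm : MeasurableSet A := hA.isClosed.measurableSet
  have hBm : MeasurableSet B := hB.isClosed.measurableSet
  have hCm : MeasurableSet C := hC.isClosed.measurableSet
  -- slice functions
  set a := fun s : ℝ => (volume (Prod.mk s ⁻¹' A)).toReal with ha_def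
  set b := fun t : ℝ => (volume (Prod.mk t ⁻¹' B)).toReal with hb_def
  set c := fun u : ℝ => (volume (Prod.mk u ⁻¹' C)).toReal with hc_def
  have hslA : ∀ s, IsCompact (Prod.mk s ⁻¹' A) := slice_compact hA
  have hslB : ∀ t, IsCompact (Prod.mk t ⁻¹' B) := slice_compact hB
  have hslC : ∀ u, IsCompact (Prod.mk u ⁻¹' C) := slice_compact hC
  have hfinA : ∀ s, volume (Prod.mk s ⁻¹' A) ≠ ∞ := fun s => (hslA s).measure_lt_top.ne
  have hfinB : ∀ t, volume (Prod.mk t ⁻¹' B) ≠ ∞ := fun t => (hslB t).measure_lt_top.ne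
  have hfinC : ∀ u, volume (Prod.mk u ⁻¹' C) ≠ ∞ := fun u => (hslC u).measure_lt_top.ne
  have ham : Measurable a := (measurable_measure_prodMk_left hAm).ennreal_toReal
  have hbm : Measurable b := (measurable_measure_prodMk_left hBm).ennreal_toReal
  have hcm : Measurable c := (measurable_measure_prodMk_left hCm).ennreal_toReal
  have ha0 : ∀ s, 0 ≤ a s := fun s => ENNReal.toReal_nonneg
  have hb0 : ∀ t, 0 ≤ b t := fun t => ENNReal.toReal_nonneg
  have hc0 : ∀ u, 0 ≤ c u := fun u => ENNReal.toReal_nonneg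
  have hab : BddAbove (Set.range a) := by
    refine ⟨(volume (Prod.snd '' A)).toReal, ?_⟩
    rintro x ⟨s, rfl⟩
    exact ENNReal.toReal_mono (hA.image continuous_snd).measure_lt_top.ne
      (measure_mono fun y hy => ⟨(s, y), hy, rfl⟩)
  have hbb : BddAbove (Set.range b) := by
    refine ⟨(volume (Prod.snd '' B)).toReal, ?_⟩
    rintro x ⟨t, rfl⟩
    exact ENNReal.toReal_mono (hB.image continuous_snd).measure_lt_top.ne
      (measure_mono fun y hy => ⟨(t, y), hy, rfl⟩)
  -- key pointwise inequality
  have key : ∀ s t, a s ^ θ * b t ^ (1 - θ) ≤ c (θ * s + (1 - θ) * t) := by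
    intro s t
    rcases Set.eq_empty_or_nonempty (Prod.mk s ⁻¹' A) with hAs | hAs
    · rw [ha_def]; simp only
      rw [hAs]
      simp [Real.zero_rpow hθ0.ne', hc0]
    rcases Set.eq_empty_or_nonempty (Prod.mk t ⁻¹' B) with hBt | hBt
    · rw [hb_def]; simp only
      rw [hBt]
      simp [Real.zero_rpow h1θ.ne', hc0]
    have incl : θ • (Prod.mk s ⁻¹' A) + (1 - θ) • (Prod.mk t ⁻¹' B)
        ⊆ Prod.mk (θ * s + (1 - θ) * t) ⁻¹' C := by
      rintro x ⟨p, hp, q, hq, rfl⟩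
      obtain ⟨y1, hy1, rfl⟩ := hp
      obtain ⟨y2, hy2, rfl⟩ := hq
      have : (θ * s + (1 - θ) * t, θ • y1 + (1 - θ) • y2) = θ • (s, y1) + (1 - θ) • (t, y2) := by
        simp [Prod.smul_mk, Prod.mk_add_mk]
      rw [Set.mem_preimage, this]
      exact Set.add_mem_add (Set.smul_mem_smul_set hy1) (Set.smul_mem_smul_set hy2)
    have hstep := ih (Prod.mk s ⁻¹' A) (Prod.mk t ⁻¹' B) (hslA s) (hslB t) hAs hBt θ hθ0 hθ1
    have hle : volume (Prod.mk s ⁻¹' A) ^ θ * volume (Prod.mk t ⁻¹' B) ^ (1 - θ)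
        ≤ volume (Prod.mk (θ * s + (1 - θ) * t) ⁻¹' C) :=
      le_trans hstep (measure_mono incl)
    have := ENNReal.toReal_mono (hfinC _) hle
    rw [ENNReal.toReal_mul, ← ENNReal.toReal_rpow, ← ENNReal.toReal_rpow] at this
    exact this
  -- apply PL1
  have PL := PL1 hθ0 hθ1 a b c ham hbm hcm ha0 hb0 hc0 hab hbb key
  -- identify the integrals with the volumes
  have hprod : (volume : Measure (ℝ × (Fin n → ℝ))) = (volume : Measure ℝ).prod volume :=
    Measure.volume_eq_prod ℝ (Fin n → ℝ)
  have IA : (∫⁻ s, ENNReal.ofReal (a s)) = volume A := by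
    rw [hprod, Measure.prod_apply hAm]
    congr 1; funext s
    rw [ha_def]; simp only
    rw [ENNReal.ofReal_toReal (hfinA s)]
  have IB : (∫⁻ t, ENNReal.ofReal (b t)) = volume B := by
    rw [hprod, Measure.prod_apply hBm]
    congr 1; funext t
    rw [hb_def]; simp only
    rw [ENNReal.ofReal_toReal (hfinB t)]
  have IC : (∫⁻ u, ENNReal.ofReal (c u)) = volume C := by
    rw [hprod, Measure.prod_apply hCm]
    congr 1; funext u
    rw [hc_def]; simp only
    rw [ENNReal.ofReal_toReal (hfinC u)]
  rw [IA, IB, IC] at PL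
  exact PL

lemma BM_succ (n : ℕ) (ih : BM n) : BM (n + 1) := by
  intro A B hA hB hAne hBne θ hθ0 hθ1
  set e := MeasurableEquiv.piFinSuccAbove (fun _ : Fin (n+1) => ℝ) 0 with he_def
  have he_fun : ⇑e = fun x : Fin (n+1) → ℝ => (x 0, fun j : Fin n => x j.succ) := by
    funext x
    simp [he_def, MeasurableEquiv.piFinSuccAbove_apply, Fin.insertNthEquiv, Fin.tail]
    rfl
  have hmp : MeasurePreserving (⇑e) volume volume := by
    have := measurePreserving_piFinSuccAbove (fun _ : Fin (n+1) => (volume : Measure ℝ)) 0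
    rw [MeasureTheory.volume_pi, Measure.volume_eq_prod, MeasureTheory.volume_pi]
    exact this
  have hcont : Continuous (⇑e) := by
    rw [he_fun]
    exact (continuous_apply 0).prodMk (continuous_pi fun j => continuous_apply _)
  have he_aff : ∀ (r s : ℝ) (x y : Fin (n+1) → ℝ),
      e (r • x + s • y) = r • e x + s • e y := by
    intro r s x y
    rw [he_fun]
    simp only
    apply Prod.ext
    · simp
    · funext j; simp
  have hvol_img : ∀ (S : Set (Fin (n+1) → ℝ)), MeasurableSet S → volume (⇑e '' S) = volume S := by
    intro S hS
    rw [show ⇑e '' S = ⇑e.symm ⁻¹' S from congrFun (Set.image_eq_preimage_of_inverse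
      (fun x => e.symm_apply_apply x) (fun x => e.apply_symm_apply x)) S]
    exact (hmp.symm e).measure_preimage hS.nullMeasurableSet
  have himg_comb : ⇑e '' (θ • A + (1 - θ) • B) = θ • (⇑e '' A) + (1 - θ) • (⇑e '' B) := by
    ext x
    constructor
    · rintro ⟨z, ⟨p, hp, q, hq, rfl⟩, rfl⟩
      obtain ⟨y1, hy1, rfl⟩ := hp
      obtain ⟨y2, hy2, rfl⟩ := hq
      rw [he_aff]
      exact Set.add_mem_add (Set.smul_mem_smul_set ⟨y1, hy1, rfl⟩)
        (Set.smul_mem_smul_set ⟨y2, hy2, rfl⟩)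
    · rintro ⟨p, hp, q, hq, rfl⟩
      obtain ⟨p', ⟨y1, hy1, rfl⟩, rfl⟩ := hp
      obtain ⟨q', ⟨y2, hy2, rfl⟩, rfl⟩ := hq
      exact ⟨θ • y1 + (1 - θ) • y2,
        Set.add_mem_add (Set.smul_mem_smul_set hy1) (Set.smul_mem_smul_set hy2),
        he_aff θ (1 - θ) y1 y2⟩
  have hC : IsCompact (θ • A + (1 - θ) • B) := (hA.smul θ).add (hB.smul (1 - θ))
  have step := BM_step n ih (⇑e '' A) (⇑e '' B) (hA.image hcont) (hB.image hcont)
    (hAne.image _) (hBne.image _) θ hθ0 hθ1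
  rw [hvol_img A hA.isClosed.measurableSet, hvol_img B hB.isClosed.measurableSet,
    ← himg_comb, hvol_img _ hC.isClosed.measurableSet] at step
  exact step

lemma BM_all (n : ℕ) : BM n := by
  induction n with
  | zero => exact BM_zero
  | succ n ih => exact BM_succ n ih

lemma sfg_eq_image {d p : ℕ} (c : Fin d → ℝ) (G : Matrix (Fin d) (Fin p) ℝ)
    (γ : Fin p → ℝ) :
    sfgZonotope c G γ = (fun μ => c + G.mulVec μ) '' (Set.Icc (-γ) γ) := by
  ext x
  simp only [sfgZonotope, Set.mem_setOf_eq, Set.mem_image, Set.mem_Icc]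
  constructor
  · rintro ⟨μ, hμ, rfl⟩
    exact ⟨μ, ⟨fun i => neg_le_of_abs_le (hμ i), fun i => le_of_abs_le (hμ i)⟩, rfl⟩
  · rintro ⟨μ, ⟨h1, h2⟩, rfl⟩
    exact ⟨μ, fun i => abs_le.mpr ⟨h1 i, h2 i⟩, rfl⟩

lemma sfg_isCompact {d p : ℕ} (c : Fin d → ℝ) (G : Matrix (Fin d) (Fin p) ℝ)
    (γ : Fin p → ℝ) : IsCompact (sfgZonotope c G γ) := by
  rw [sfg_eq_image]
  refine isCompact_Icc.image ?_
  exact continuous_const.add (Matrix.mulVecLin G).continuous_on_pi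

lemma sfg_nonempty {d p : ℕ} (c : Fin d → ℝ) (G : Matrix (Fin d) (Fin p) ℝ)
    {γ : Fin p → ℝ} (hγ : ∀ i, 0 ≤ γ i) : (sfgZonotope c G γ).Nonempty :=
  ⟨c + G.mulVec 0, 0, fun i => by simpa using hγ i, rfl⟩

/-- Proposition 4: log-concavity of the zonotope volume in the SFG parameterization.
For nonnegative `γ1, γ2` and `θ ∈ [0,1]`,
`vol(Z_{θ γ1 + (1−θ) γ2}) ≥ vol(Z_{γ1})^θ · vol(Z_{γ2})^(1−θ)`. -/
theorem sfg_volume_log_concave (d p : ℕ) (G : Matrix (Fin d) (Fin p) ℝ) (c : Fin d → ℝ)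
    (γ1 γ2 : Fin p → ℝ) (hγ1 : ∀ i, 0 ≤ γ1 i) (hγ2 : ∀ i, 0 ≤ γ2 i)
    (θ : ℝ) (hθ0 : 0 ≤ θ) (hθ1 : θ ≤ 1) :
    volume (sfgZonotope c G (θ • γ1 + (1 - θ) • γ2))
      ≥ volume (sfgZonotope c G γ1) ^ θ * volume (sfgZonotope c G γ2) ^ (1 - θ) := by
  rcases eq_or_lt_of_le hθ0 with rfl | hθ0'
  · rw [show (0:ℝ) • γ1 + ((1:ℝ) - 0) • γ2 = γ2 by funext i; simp]
    simp [ENNReal.rpow_zero, ENNReal.rpow_one]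
  rcases eq_or_lt_of_le hθ1 with rfl | hθ1'
  · rw [show (1:ℝ) • γ1 + ((1:ℝ) - 1) • γ2 = γ1 by funext i; simp]
    simp [ENNReal.rpow_zero, ENNReal.rpow_one]
  -- main case
  have incl : θ • sfgZonotope c G γ1 + (1 - θ) • sfgZonotope c G γ2
      ⊆ sfgZonotope c G (θ • γ1 + (1 - θ) • γ2) := by
    rintro x ⟨a, ha, b, hb, rfl⟩
    obtain ⟨x1, ⟨μ1, hμ1, rfl⟩, rfl⟩ := ha
    obtain ⟨x2, ⟨μ2, hμ2, rfl⟩, rfl⟩ := hb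
    refine ⟨θ • μ1 + (1 - θ) • μ2, fun i => ?_, ?_⟩
    · have h1θ : (0:ℝ) ≤ 1 - θ := by linarith
      calc |(θ • μ1 + (1 - θ) • μ2) i| = |θ * μ1 i + (1 - θ) * μ2 i| := by
            simp [Pi.add_apply, Pi.smul_apply, smul_eq_mul]
        _ ≤ |θ * μ1 i| + |(1 - θ) * μ2 i| := abs_add_le _ _
        _ = θ * |μ1 i| + (1 - θ) * |μ2 i| := by
            rw [abs_mul, abs_mul, abs_of_nonneg hθ0, abs_of_nonneg h1θ]
        _ ≤ θ * γ1 i + (1 - θ) * γ2 i := by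
            have := hμ1 i; have := hμ2 i
            have h1 : θ * |μ1 i| ≤ θ * γ1 i := mul_le_mul_of_nonneg_left (hμ1 i) hθ0
            have h2 : (1 - θ) * |μ2 i| ≤ (1 - θ) * γ2 i :=
              mul_le_mul_of_nonneg_left (hμ2 i) h1θ
            linarith
        _ = (θ • γ1 + (1 - θ) • γ2) i := by simp [smul_eq_mul]
    · rw [Matrix.mulVec_add, Matrix.mulVec_smul, Matrix.mulVec_smul]
      funext i
      simp [smul_eq_mul]
      ring
  have bm := BM_all d (sfgZonotope c G γ1) (sfgZonotope c G γ2)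
    (sfg_isCompact c G γ1) (sfg_isCompact c G γ2)
    (sfg_nonempty c G hγ1) (sfg_nonempty c G hγ2) θ hθ0' hθ1'
  exact le_trans bm (measure_mono incl)
end

section
/- (Zonotope volume formula, full-rank case of equation (2)) Let G ∈ ℝ^{d×p} with p ≥ d have rank d. Then for any center c ∈ ℝ^d, the Lebesgue measure of the zonotope Z(c,G) equals 2^d · Σ_J |det G^J|, where the sum runs over all d-element subsets J of the column indices {1,...,p} and G^J ∈ ℝ^{d×d} is the submatrix of G consisting of the columns indexed by J. -/
open MeasureTheory

open MeasureTheory Set Pointwise ENNReal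

namespace ZonoAux

def cube (p : ℕ) : Set (Fin p → ℝ) := Set.univ.pi fun _ => Set.Icc (0:ℝ) 1

lemma cube_compact (p : ℕ) : IsCompact (cube p) := isCompact_univ_pi fun _ => isCompact_Icc
lemma cube_convex (p : ℕ) : Convex ℝ (cube p) := convex_pi fun _ _ => convex_Icc 0 1
lemma cube_nonempty (p : ℕ) : (cube p).Nonempty :=
  ⟨0, fun i _ => ⟨le_refl _, zero_le_one⟩⟩

/-- Segment from `0` to `v`. -/
def seg {d : ℕ} (v : Fin d → ℝ) : Set (Fin d → ℝ) := (fun t : ℝ => t • v) '' Set.Icc 0 1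

lemma seg_compact {d : ℕ} (v : Fin d → ℝ) : IsCompact (seg v) :=
  isCompact_Icc.image (continuous_id.smul continuous_const)

/-- 1-D : volume of `A + [0,1]` for a nonempty bounded convex `A ⊆ ℝ`. -/
lemma vol1_add_Icc (A : Set ℝ) (hc : Convex ℝ A) (hb : Bornology.IsBounded A)
    (hne : A.Nonempty) : volume (A + Set.Icc (0:ℝ) 1) = volume A + 1 := by
  set a := sInf A with ha
  set b := sSup A with hbb
  have hba : BddAbove A := hb.bddAbove
  have hbl : BddBelow A := hb.bddBelow
  have hab : a ≤ b := csInf_le_csSup hne hbl hba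
  have hsub : A ⊆ Icc a b := fun x hx => ⟨csInf_le hbl hx, le_csSup hba hx⟩
  have hsup : Ioo a b ⊆ A := by
    have hconn : IsConnected A := ⟨hne, hc.isPreconnected⟩
    exact hconn.Ioo_csInf_csSup_subset hbl hba
  have hA : volume A = ENNReal.ofReal (b - a) := by
    refine le_antisymm ?_ ?_
    · calc volume A ≤ volume (Icc a b) := measure_mono hsub
        _ = ENNReal.ofReal (b - a) := Real.volume_Icc
    · calc ENNReal.ofReal (b - a) = volume (Ioo a b) := Real.volume_Ioo.symm
        _ ≤ volume A := measure_mono hsup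
  have hsub2 : A + Icc (0:ℝ) 1 ⊆ Icc a (b + 1) := by
    rintro x hx
    rw [Set.mem_add] at hx
    obtain ⟨u, hu, s, hs, rfl⟩ := hx
    obtain ⟨hu1, hu2⟩ := hsub hu
    exact ⟨by linarith [hs.1], by linarith [hs.2]⟩
  have hsup2 : Ioo a (b + 1) ⊆ A + Icc (0:ℝ) 1 := by
    rintro t ⟨ht1, ht2⟩
    obtain ⟨u₀, hu₀A, hu₀⟩ := exists_lt_of_csInf_lt hne ht1
    have h1 : t - 1 < b := by linarith
    obtain ⟨u₁, hu₁A, hu₁⟩ := exists_lt_of_lt_csSup hne h1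
    rcases le_or_gt u₁ t with h | h
    · exact Set.mem_add.2 ⟨u₁, hu₁A, t - u₁, ⟨by linarith, by linarith⟩, by ring⟩
    · have htA : t ∈ A := by
        have : t ∈ Icc u₀ u₁ := ⟨le_of_lt hu₀, le_of_lt h⟩
        exact hc.ordConnected.out hu₀A hu₁A this
      exact Set.mem_add.2 ⟨t, htA, 0, ⟨le_refl _, zero_le_one⟩, by ring⟩
  have hS : volume (A + Icc (0:ℝ) 1) = ENNReal.ofReal (b + 1 - a) := by
    refine le_antisymm ?_ ?_
    · calc volume (A + Icc (0:ℝ) 1) ≤ volume (Icc a (b+1)) := measure_mono hsub2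
        _ = ENNReal.ofReal (b + 1 - a) := Real.volume_Icc
    · calc ENNReal.ofReal (b + 1 - a) = volume (Ioo a (b+1)) := Real.volume_Ioo.symm
        _ ≤ volume (A + Icc (0:ℝ) 1) := measure_mono hsup2
  rw [hS, hA]
  rw [show b + 1 - a = (b - a) + 1 by ring, ENNReal.ofReal_add (by linarith) zero_le_one,
    ENNReal.ofReal_one]

lemma vol1_empty_add : (∅ : Set ℝ) + Set.Icc (0:ℝ) 1 = ∅ := by
  simp

/-- Fubini slicing lemma. -/
lemma vol_add_seg (e : ℕ) (i : Fin (e+1)) (A : Set (Fin (e+1) → ℝ))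
    (hA : Convex ℝ A) (hK : IsCompact A) :
    volume (A + seg (Pi.single i (1:ℝ)))
      = volume A + volume ((fun x => x ∘ i.succAbove) '' A) := by
  classical
  set v : Fin (e+1) → ℝ := Pi.single i 1 with hv
  -- the splitting map
  set φ : (Fin (e+1) → ℝ) → ℝ × (Fin e → ℝ) := fun x => (x i, x ∘ i.succAbove) with hφ
  have hφlin : IsLinearMap ℝ φ := by
    constructor
    · intro x y; rfl
    · intro c x; rfl
  have hφcont : Continuous φ :=
    (continuous_apply i).prodMk (continuous_pi fun j => continuous_apply _)
  have hφeq : ⇑(MeasurableEquiv.piFinSuccAbove (fun _ : Fin (e+1) => ℝ) i) = φ := rfl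
  have hmp : MeasurePreserving φ volume volume := by
    rw [← hφeq]; exact volume_preserving_piFinSuccAbove _ i
  -- volume of measurable sets via images under φ
  have key : ∀ S : Set (Fin (e+1) → ℝ), MeasurableSet (φ '' S) → volume (φ '' S) = volume S := by
    intro S hS
    have hinj : Function.Injective φ := by
      rw [← hφeq]; exact (MeasurableEquiv.piFinSuccAbove (fun _ : Fin (e+1) => ℝ) i).injective
    have : S = φ ⁻¹' (φ '' S) := by
      rw [Set.preimage_image_eq _ hinj]
    conv_rhs => rw [this]
    exact (hmp.measure_preimage hS.nullMeasurableSet).symm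
  set B := A + seg v with hB
  have hBK : IsCompact B := hK.add (seg_compact v)
  have hφAK : IsCompact (φ '' A) := hK.image hφcont
  have hφBK : IsCompact (φ '' B) := hBK.image hφcont
  set shadow : Set (Fin e → ℝ) := (fun x => x ∘ i.succAbove) '' A with hshadow
  have hshK : IsCompact shadow := hK.image (continuous_pi fun j => continuous_apply _)
  -- slices
  set sl : (Fin e → ℝ) → Set ℝ := fun y => {t : ℝ | (t, y) ∈ φ '' A} with hsl
  have hslB : ∀ y, {t : ℝ | (t, y) ∈ φ '' B} = sl y + Set.Icc (0:ℝ) 1 := by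
    intro y
    ext t
    simp only [hsl, Set.mem_setOf_eq, Set.mem_add]
    constructor
    · rintro ⟨x, hx, hxt⟩
      rw [hB, Set.mem_add] at hx
      obtain ⟨a', ha', s', hs', rfl⟩ := hx
      obtain ⟨s, hs, rfl⟩ := hs'
      have h1 : (a' + s • v) i = a' i + s := by
        simp [hv, Pi.single_apply]
      have h2 : (a' + s • v) ∘ i.succAbove = a' ∘ i.succAbove := by
        funext j
        have : i.succAbove j ≠ i := Fin.succAbove_ne i j
        simp [hv, Pi.single_apply, this]
      have ht : t = a' i + s := by
        have := congrArg Prod.fst hxt; simpa [hφ, h1] using this.symm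
      have hy : y = a' ∘ i.succAbove := by
        have := congrArg Prod.snd hxt; simpa [hφ, h2] using this.symm
      exact ⟨a' i, ⟨a', ha', by rw [hy]⟩, s, hs, by rw [ht]⟩
    · rintro ⟨u, ⟨x, hx, hxu⟩, s, hs, rfl⟩
      refine ⟨x + s • v, Set.mem_add.2 ⟨x, hx, s • v, ⟨s, hs, rfl⟩, rfl⟩, ?_⟩
      have h2 : (x + s • v) ∘ i.succAbove = x ∘ i.succAbove := by
        funext j
        have : i.succAbove j ≠ i := Fin.succAbove_ne i j
        simp [hv, Pi.single_apply, this]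
      have h1 : (x + s • v) i = x i + s := by simp [hv, Pi.single_apply]
      have hxi : x i = u := congrArg Prod.fst hxu
      have hxy : x ∘ i.succAbove = y := congrArg Prod.snd hxu
      simp [hφ, h1, h2, hxi, hxy]
  have hslconv : ∀ y, Convex ℝ (sl y) := by
    intro y
    have hconv : Convex ℝ (φ '' A) := hA.is_linear_image hφlin
    intro t1 h1 t2 h2 α β hα hβ hαβ
    have hyy : α • y + β • y = y := Convex.combo_self hαβ y
    show (α * t1 + β * t2, y) ∈ φ '' A
    have heq : α • ((t1:ℝ), y) + β • ((t2:ℝ), y) = (α * t1 + β * t2, y) := by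
      simp [Prod.ext_iff, hyy, smul_eq_mul]
    rw [← heq]
    exact hconv h1 h2 hα hβ hαβ
  have hslbdd : ∀ y, Bornology.IsBounded (sl y) := by
    intro y
    have : sl y ⊆ Prod.fst '' (φ '' A) := by
      rintro t ht; exact ⟨(t, y), ht, rfl⟩
    exact (((hφAK.image continuous_fst).isBounded)).subset this
  have hslne : ∀ y, (sl y).Nonempty ↔ y ∈ shadow := by
    intro y
    constructor
    · rintro ⟨t, x, hx, hxt⟩
      exact ⟨x, hx, congrArg Prod.snd hxt⟩
    · rintro ⟨x, hx, rfl⟩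
      exact ⟨x i, x, hx, rfl⟩
  -- pointwise volume of slices
  have hpt : ∀ y, volume {t : ℝ | (t, y) ∈ φ '' B}
      = volume (sl y) + shadow.indicator (fun _ => (1:ℝ≥0∞)) y := by
    intro y
    rw [hslB y]
    by_cases hy : y ∈ shadow
    · rw [Set.indicator_of_mem hy]
      exact vol1_add_Icc (sl y) (hslconv y) (hslbdd y) ((hslne y).2 hy)
    · have : sl y = ∅ := by
        rw [← Set.not_nonempty_iff_eq_empty]
        exact fun h => hy ((hslne y).1 h)
      rw [Set.indicator_of_notMem hy, this]
      simp
  -- Fubini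
  have hprod : ∀ S : Set (Fin (e+1) → ℝ), MeasurableSet (φ '' S) →
      volume S = ∫⁻ y, volume {t : ℝ | (t, y) ∈ φ '' S} := by
    intro S hS
    rw [← key S hS]
    have : (volume : Measure (ℝ × (Fin e → ℝ))) = (volume : Measure ℝ).prod volume := rfl
    rw [this, Measure.prod_apply_symm hS]
    rfl
  rw [hprod B (hφBK.measurableSet), hprod A (hφAK.measurableSet)]
  have : ∫⁻ y, volume {t : ℝ | (t, y) ∈ φ '' B}
      = ∫⁻ y, (volume (sl y) + shadow.indicator (fun _ => (1:ℝ≥0∞)) y) := by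
    exact lintegral_congr hpt
  rw [this]
  have hmeas : Measurable fun y => volume (sl y) :=
    measurable_measure_prodMk_right (hφAK.measurableSet)
  rw [lintegral_add_left hmeas]
  congr 1
  exact lintegral_indicator_one hshK.measurableSet



/-- |det| only depends on the set of columns chosen. -/
lemma absdet_congr {d p : ℕ} (G : Matrix (Fin d) (Fin p) ℝ) (σ τ : Fin d → Fin p)
    (hσ : Function.Injective σ) (hτ : Function.Injective τ) (h : Set.range σ = Set.range τ) :
    |(G.submatrix id σ).det| = |(G.submatrix id τ).det| := by
  classical
  set π : Equiv.Perm (Fin d) :=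
    (Equiv.ofInjective σ hσ).trans ((Equiv.setCongr h).trans (Equiv.ofInjective τ hτ).symm) with hπ
  have hcomp : ∀ k, τ (π k) = σ k := by
    intro k
    simp only [hπ, Equiv.trans_apply, Equiv.setCongr_apply]
    exact Equiv.apply_ofInjective_symm hτ _
  have hsub : G.submatrix id σ = (G.submatrix id τ).submatrix id ⇑π := by
    ext i k
    simp [Matrix.submatrix_apply, hcomp k]
  rw [hsub, Matrix.det_permute' π (G.submatrix id τ), abs_mul]
  rcases Int.units_eq_one_or (Equiv.Perm.sign π) with hs | hs <;> simp [hs]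

/-- Expanding along a standard-basis last column. -/
lemma absdet_col_single {e : ℕ} (i : Fin (e+1)) (M : Matrix (Fin (e+1)) (Fin (e+1)) ℝ)
    (hcol : ∀ j, M j (Fin.last e) = (Pi.single i (1:ℝ) : Fin (e+1) → ℝ) j) :
    |M.det| = |(M.submatrix i.succAbove Fin.castSucc).det| := by
  classical
  rw [Matrix.det_succ_column M (Fin.last e)]
  have hterm : ∀ j : Fin (e+1), j ≠ i →
      (-1:ℝ) ^ ((j:ℕ) + (Fin.last e : ℕ)) * M j (Fin.last e)
        * ((M.submatrix j.succAbove (Fin.last e).succAbove).det) = 0 := by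
    intro j hj
    rw [hcol j, Pi.single_apply, if_neg hj]
    ring
  rw [Finset.sum_eq_single i (fun j _ hj => hterm j hj) (by simp)]
  rw [hcol i, Pi.single_apply, if_pos rfl, Fin.succAbove_last]
  simp [abs_mul, abs_pow]

lemma castSucc_mem_map {p : ℕ} (J' : Finset (Fin p)) (x : Fin p) :
    x.castSucc ∈ J'.map Fin.castSuccEmb ↔ x ∈ J' := by
  constructor
  · rintro h
    obtain ⟨y, hy, hyx⟩ := Finset.mem_map.1 h
    have : y.castSucc = x.castSucc := hyx
    rwa [(Fin.castSucc_injective p) this] at hy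
  · intro h; exact Finset.mem_map.2 ⟨x, h, rfl⟩

lemma last_not_mem_map {p : ℕ} (J' : Finset (Fin p)) :
    Fin.last p ∉ J'.map Fin.castSuccEmb := by
  intro h
  obtain ⟨y, _, hy⟩ := Finset.mem_map.1 h
  exact absurd (hy : y.castSucc = Fin.last p) (Fin.ne_last_of_lt (Fin.castSucc_lt_last y))

lemma map_preimage_castSucc {p : ℕ} (J : Finset (Fin (p+1))) (hJ : Fin.last p ∉ J) :
    (J.preimage Fin.castSucc (fun a _ b _ hab => Fin.castSucc_injective _ hab)).map
      Fin.castSuccEmb = J := by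
  ext x
  constructor
  · intro h
    obtain ⟨y, hy, hyx⟩ := Finset.mem_map.1 h
    have : y.castSucc = x := hyx
    rw [← this]
    exact Finset.mem_preimage.1 hy
  · intro hx
    have hne : x ≠ Fin.last p := fun hxl => hJ (hxl ▸ hx)
    obtain ⟨y, rfl⟩ := Fin.exists_castSucc_eq.2 hne
    exact Finset.mem_map.2 ⟨y, Finset.mem_preimage.2 hx, rfl⟩

lemma preimage_map_castSucc {p : ℕ} (J' : Finset (Fin p)) :
    (J'.map Fin.castSuccEmb).preimage Fin.castSucc
      (fun a _ b _ hab => Fin.castSucc_injective _ hab) = J' := by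
  ext x
  exact Finset.mem_preimage.trans (castSucc_mem_map J' x)

/-- Splitting a sum over subsets of `Fin (p+1)`. -/
lemma sum_finset_split (p : ℕ) {M : Type*} [AddCommMonoid M] (f : Finset (Fin (p+1)) → M) :
    ∑ J : Finset (Fin (p+1)), f J
      = ∑ J' : Finset (Fin p), f (J'.map Fin.castSuccEmb)
        + ∑ J' : Finset (Fin p), f (insert (Fin.last p) (J'.map Fin.castSuccEmb)) := by
  classical
  rw [← Finset.sum_filter_add_sum_filter_not Finset.univ (fun J => Fin.last p ∉ J) f]
  congr 1
  · refine (Finset.sum_nbij' (i := fun J' : Finset (Fin p) => J'.map Fin.castSuccEmb)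
      (j := fun J => J.preimage Fin.castSucc
        (fun a _ b _ hab => Fin.castSucc_injective _ hab)) ?_ ?_ ?_ ?_ ?_).symm
    · intro J' _
      simp only [Finset.mem_filter, Finset.mem_univ, true_and]
      exact last_not_mem_map J'
    · intro J _; exact Finset.mem_univ _
    · intro J' _
      exact preimage_map_castSucc J'
    · intro J hJ
      simp only [Finset.mem_filter, Finset.mem_univ, true_and] at hJ
      exact map_preimage_castSucc J hJ
    · intro J' _; rfl
  · refine (Finset.sum_nbij'
      (i := fun J' : Finset (Fin p) => insert (Fin.last p) (J'.map Fin.castSuccEmb))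
      (j := fun J => (J.erase (Fin.last p)).preimage Fin.castSucc
        (fun a _ b _ hab => Fin.castSucc_injective _ hab)) ?_ ?_ ?_ ?_ ?_).symm
    · intro J' _
      simp [Finset.mem_filter]
    · intro J _; exact Finset.mem_univ _
    · intro J' _
      show ((insert (Fin.last p) (J'.map Fin.castSuccEmb)).erase (Fin.last p)).preimage
        Fin.castSucc (fun a _ b _ hab => Fin.castSucc_injective _ hab) = J'
      rw [Finset.erase_insert (last_not_mem_map J'), preimage_map_castSucc J']
    · intro J hJ
      simp only [Finset.mem_filter, Finset.mem_univ, true_and, not_not] at hJ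
      show insert (Fin.last p) (((J.erase (Fin.last p)).preimage Fin.castSucc
        (fun a _ b _ hab => Fin.castSucc_injective _ hab)).map Fin.castSuccEmb) = J
      rw [map_preimage_castSucc _ (Finset.notMem_erase _ _), Finset.insert_erase hJ]
    · intro J' _; rfl

/-- orderEmbOfFin of a castSucc-mapped finset. -/
lemma orderEmb_map_castSucc {p k : ℕ} (J' : Finset (Fin p)) (h' : J'.card = k)
    (h : (J'.map Fin.castSuccEmb).card = k) :
    ⇑((J'.map Fin.castSuccEmb).orderEmbOfFin h)
      = Fin.castSucc ∘ ⇑(J'.orderEmbOfFin h') := by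
  refine (Finset.orderEmbOfFin_unique h ?_ ?_).symm
  · intro x
    simp only [Function.comp_apply, Finset.mem_map, Fin.castSuccEmb]
    exact ⟨J'.orderEmbOfFin h' x, Finset.orderEmbOfFin_mem J' h' x, rfl⟩
  · exact Fin.strictMono_castSucc.comp (J'.orderEmbOfFin h').strictMono



variable {e : ℕ}

/-- identity with column `i` replaced by `v`. -/
def Nmat (v : Fin (e+1) → ℝ) (i : Fin (e+1)) : Matrix (Fin (e+1)) (Fin (e+1)) ℝ :=
  fun j k => if k = i then v j else if j = k then 1 else 0

/-- Inverse shear matrix. -/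
noncomputable def Tmat (v : Fin (e+1) → ℝ) (i : Fin (e+1)) :
    Matrix (Fin (e+1)) (Fin (e+1)) ℝ :=
  fun j k =>
    if j = i then (if k = i then (v i)⁻¹ else 0)
    else (if k = i then -(v j * (v i)⁻¹) else if j = k then 1 else 0)

lemma Tmat_mulVec (v : Fin (e+1) → ℝ) (i : Fin (e+1)) (hv : v i ≠ 0) :
    (Tmat v i).mulVec v = Pi.single i 1 := by
  funext j
  rw [Matrix.mulVec, dotProduct]
  by_cases hj : j = i
  · have h1 : ∀ k, Tmat v i j k * v k = if k = i then 1 else 0 := by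
      intro k
      by_cases hk : k = i
      · simp only [Tmat, if_pos hj, if_pos hk, hk]
        simp [inv_mul_cancel₀ hv]
      · simp only [Tmat, if_pos hj, if_neg hk]
        simp
    rw [Finset.sum_congr rfl fun k _ => h1 k,
      Finset.sum_ite_eq' Finset.univ i fun _ => (1:ℝ)]
    simp [Pi.single_apply, hj]
  · have h1 : ∀ k, Tmat v i j k * v k
        = (if k = i then -(v j) else 0) + (if k = j then v j else 0) := by
      intro k
      by_cases hk : k = i
      · have hkj : ¬ k = j := fun h => hj (h ▸ hk)
        simp only [Tmat, if_neg hj, if_pos hk, hk]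
        rw [if_neg (fun h : i = j => hj h.symm)]
        simp only [if_true, add_zero]
        field_simp
      · by_cases hjk : j = k
        · simp only [Tmat, if_neg hj, if_neg hk, if_pos hjk]
          rw [if_pos hjk.symm, one_mul, zero_add, hjk]
        · simp only [Tmat, if_neg hj, if_neg hk, if_neg hjk]
          rw [if_neg (fun h : k = j => hjk h.symm), zero_mul, add_zero]
    rw [Finset.sum_congr rfl fun k _ => h1 k, Finset.sum_add_distrib,
      Finset.sum_ite_eq' Finset.univ i fun _ => -(v j),
      Finset.sum_ite_eq' Finset.univ j fun _ => v j]
    simp [Pi.single_apply, hj]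

lemma Tmat_mul_Nmat (v : Fin (e+1) → ℝ) (i : Fin (e+1)) (hv : v i ≠ 0) :
    Tmat v i * Nmat v i = 1 := by
  ext j k
  rw [Matrix.mul_apply]
  by_cases hk : k = i
  · have h1 : ∀ m, Tmat v i j m * Nmat v i m k = Tmat v i j m * v m := by
      intro m
      simp only [Nmat, if_pos hk]
    rw [Finset.sum_congr rfl fun m _ => h1 m]
    have h2 : ∑ m, Tmat v i j m * v m = (Tmat v i).mulVec v j := rfl
    rw [h2, Tmat_mulVec v i hv, hk]
    rw [Pi.single_apply, Matrix.one_apply]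
  · have h1 : ∀ m, Tmat v i j m * Nmat v i m k
        = if m = k then Tmat v i j m else 0 := by
      intro m
      by_cases hm : m = k
      · simp only [Nmat, if_neg (fun h : k = i => hk h), if_pos hm, hm]
        simp
      · simp only [Nmat, if_neg (fun h : k = i => hk h)]
        simp [hm]
    rw [Finset.sum_congr rfl fun m _ => h1 m,
      Finset.sum_ite_eq' Finset.univ k fun m => Tmat v i j m]
    rw [if_pos (Finset.mem_univ k)]
    by_cases hj : j = i
    · rw [Matrix.one_apply_ne (fun h : j = k => hk (h ▸ hj : _))]
      simp only [Tmat, if_pos hj, if_neg hk]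
    · simp only [Tmat, if_neg hj, if_neg hk, Matrix.one_apply]

lemma det_Nmat (v : Fin (e+1) → ℝ) (i : Fin (e+1)) : (Nmat v i).det = v i := by
  rw [Matrix.det_succ_row (Nmat v i) i]
  have h1 : ∀ k, k ≠ i → (-1:ℝ) ^ ((i:ℕ) + (k:ℕ)) * Nmat v i i k
      * ((Nmat v i).submatrix i.succAbove k.succAbove).det = 0 := by
    intro k hk
    have h0 : Nmat v i i k = 0 := by
      simp only [Nmat]
      rw [if_neg (fun h : k = i => hk h), if_neg (fun h : i = k => hk h.symm)]
    rw [h0]; ring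
  rw [Finset.sum_eq_single i (fun k _ hk => h1 k hk) (by simp)]
  have hminor : (Nmat v i).submatrix i.succAbove i.succAbove = 1 := by
    ext a b
    have hb : i.succAbove b ≠ i := Fin.succAbove_ne i b
    simp only [Matrix.submatrix_apply, Nmat]
    rw [if_neg hb]
    by_cases hab : a = b
    · rw [if_pos (congrArg _ hab), hab, Matrix.one_apply_eq]
    · have : i.succAbove a ≠ i.succAbove b := fun h => hab (Fin.succAbove_right_injective h)
      rw [if_neg this, Matrix.one_apply_ne hab]
  rw [hminor, Matrix.det_one]
  have h2 : Nmat v i i i = v i := by simp [Nmat]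
  rw [h2, ← two_mul, pow_mul]
  norm_num

lemma det_Tmat (v : Fin (e+1) → ℝ) (i : Fin (e+1)) (hv : v i ≠ 0) :
    (Tmat v i).det = (v i)⁻¹ := by
  have h := congrArg Matrix.det (Tmat_mul_Nmat v i hv)
  rw [Matrix.det_mul, Matrix.det_one, det_Nmat] at h
  field_simp at h ⊢
  linarith [h]


section Main

/-- Decomposition of the cube image when adding one generator. -/
lemma mulVec_split {d p : ℕ} (G : Matrix (Fin d) (Fin (p+1)) ℝ) (lam : Fin (p+1) → ℝ) :
    G.mulVec lam = (G.submatrix id Fin.castSucc).mulVec (lam ∘ Fin.castSucc)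
      + (lam (Fin.last p)) • (fun j => G j (Fin.last p)) := by
  funext j
  rw [Pi.add_apply, Matrix.mulVec, dotProduct, Fin.sum_univ_castSucc]
  have h1 : (G.submatrix id Fin.castSucc).mulVec (lam ∘ Fin.castSucc) j
      = ∑ k : Fin p, G j (Fin.castSucc k) * lam (Fin.castSucc k) := rfl
  have h2 : ((lam (Fin.last p)) • (fun j => G j (Fin.last p))) j
      = lam (Fin.last p) * G j (Fin.last p) := rfl
  rw [h1, h2, mul_comm]

lemma image_cube_succ {d p : ℕ} (G : Matrix (Fin d) (Fin (p+1)) ℝ) :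
    G.mulVec '' cube (p+1)
      = (G.submatrix id Fin.castSucc).mulVec '' cube p + seg (fun j => G j (Fin.last p)) := by
  ext x
  constructor
  · rintro ⟨lam, hlam, rfl⟩
    rw [Set.mem_add]
    refine ⟨(G.submatrix id Fin.castSucc).mulVec (lam ∘ Fin.castSucc),
      ⟨lam ∘ Fin.castSucc, fun k _ => hlam (Fin.castSucc k) (Set.mem_univ _), rfl⟩,
      (lam (Fin.last p)) • (fun j => G j (Fin.last p)),
      ⟨lam (Fin.last p), hlam (Fin.last p) (Set.mem_univ _), rfl⟩, (mulVec_split G lam).symm⟩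
  · intro hx
    rw [Set.mem_add] at hx
    obtain ⟨a, ⟨mu, hmu, rfl⟩, b, ⟨s, hs, rfl⟩, rfl⟩ := hx
    refine ⟨Fin.snoc mu s, ?_, ?_⟩
    · intro k _
      rcases Fin.eq_castSucc_or_eq_last k with ⟨k', rfl⟩ | rfl
      · rw [Fin.snoc_castSucc]; exact hmu k' (Set.mem_univ _)
      · rw [Fin.snoc_last]; exact hs
    · rw [mulVec_split G (Fin.snoc mu s)]
      have hcomp : (Fin.snoc mu s : Fin (p+1) → ℝ) ∘ Fin.castSucc = mu := by
        funext k; exact Fin.snoc_castSucc ..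
      rw [hcomp, Fin.snoc_last]

lemma vol_d0 (S : Set (Fin 0 → ℝ)) (h : S.Nonempty) : volume S = 1 := by
  have hS : S = Set.univ := by
    obtain ⟨y, hy⟩ := h
    ext x
    simp only [Set.mem_univ, iff_true]
    rwa [Subsingleton.elim x y]
  rw [hS, ← Set.pi_univ, volume_pi_pi]
  simp

lemma sum_d0 {p : ℕ} (G : Matrix (Fin 0) (Fin p) ℝ) :
    (∑ J : Finset (Fin p), if h : J.card = 0 then
        ENNReal.ofReal |(G.submatrix id (J.orderEmbOfFin h)).det| else 0) = 1 := by
  rw [Fintype.sum_eq_single (∅ : Finset (Fin p))]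
  · rw [dif_pos Finset.card_empty]
    simp [Matrix.det_fin_zero]
  · intro J hJ
    rw [dif_neg]
    simpa [Finset.card_eq_zero] using hJ

lemma mulVec_continuous {d p : ℕ} (G : Matrix (Fin d) (Fin p) ℝ) :
    Continuous fun lam => G.mulVec lam := by
  have h := LinearMap.continuous_of_finiteDimensional (Matrix.toLin' G)
  exact h

lemma mulVec_isLinear {d p : ℕ} (G : Matrix (Fin d) (Fin p) ℝ) :
    IsLinearMap ℝ fun lam => G.mulVec lam :=
  ⟨fun x y => Matrix.mulVec_add G x y, fun c x => Matrix.mulVec_smul G c x⟩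

lemma det_insert_last {e p : ℕ} (G : Matrix (Fin (e+1)) (Fin (p+1)) ℝ) (i : Fin (e+1))
    (hvi : G i (Fin.last p) ≠ 0) (J' : Finset (Fin p)) (hc : J'.card = e)
    (hcJ : (insert (Fin.last p) (J'.map Fin.castSuccEmb)).card = e+1) :
    |(G.submatrix id ((insert (Fin.last p) (J'.map Fin.castSuccEmb)).orderEmbOfFin hcJ)).det|
      = |G i (Fin.last p)| *
        |(((Tmat (fun j => G j (Fin.last p)) i * G.submatrix id Fin.castSucc).submatrix
            i.succAbove id).submatrix id (J'.orderEmbOfFin hc)).det| := by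
  classical
  have hg_cs : ∀ k : Fin e,
      (Fin.snoc (fun k => Fin.castSucc (J'.orderEmbOfFin hc k)) (Fin.last p) : Fin (e+1) → Fin (p+1))
        k.castSucc = (J'.orderEmbOfFin hc k).castSucc := fun k => Fin.snoc_castSucc ..
  set g : Fin (e+1) → Fin (p+1) :=
    Fin.snoc (fun k => Fin.castSucc (J'.orderEmbOfFin hc k)) (Fin.last p) with hg
  have hg_last : g (Fin.last e) = Fin.last p := Fin.snoc_last ..
  have hg_inj : Function.Injective g := by
    intro a b hab
    rcases Fin.eq_castSucc_or_eq_last a with ⟨a', rfl⟩ | rfl <;>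
      rcases Fin.eq_castSucc_or_eq_last b with ⟨b', rfl⟩ | rfl
    · rw [hg_cs, hg_cs] at hab
      rw [(J'.orderEmbOfFin hc).injective (Fin.castSucc_injective _ hab)]
    · rw [hg_cs, hg_last] at hab
      exact absurd hab (Fin.ne_last_of_lt (Fin.castSucc_lt_last _))
    · rw [hg_last, hg_cs] at hab
      exact absurd hab.symm (Fin.ne_last_of_lt (Fin.castSucc_lt_last _))
    · rfl
  have hg_mem : ∀ k, g k ∈ insert (Fin.last p) (J'.map Fin.castSuccEmb) := by
    intro k
    rcases Fin.eq_castSucc_or_eq_last k with ⟨k', rfl⟩ | rfl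
    · rw [hg_cs]
      exact Finset.mem_insert_of_mem ((castSucc_mem_map J' _).2 (Finset.orderEmbOfFin_mem J' hc k'))
    · rw [hg_last]; exact Finset.mem_insert_self ..
  have hg_range : Set.range g = ↑(insert (Fin.last p) (J'.map Fin.castSuccEmb)) := by
    have h1 : Finset.univ.image g ⊆ insert (Fin.last p) (J'.map Fin.castSuccEmb) := by
      intro x hx
      obtain ⟨k, _, rfl⟩ := Finset.mem_image.1 hx
      exact hg_mem k
    have h2 : (insert (Fin.last p) (J'.map Fin.castSuccEmb)).card
        ≤ (Finset.univ.image g).card := by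
      rw [Finset.card_image_of_injective _ hg_inj, Finset.card_univ, Fintype.card_fin, hcJ]
    rw [← Finset.eq_of_subset_of_card_le h1 h2, Finset.coe_image, Finset.coe_univ, Set.image_univ]
  have habs1 : |(G.submatrix id
        ((insert (Fin.last p) (J'.map Fin.castSuccEmb)).orderEmbOfFin hcJ)).det|
      = |(G.submatrix id g).det| :=
    absdet_congr G _ g ((insert (Fin.last p) (J'.map Fin.castSuccEmb)).orderEmbOfFin
      hcJ).injective hg_inj (by rw [Finset.range_orderEmbOfFin, hg_range])
  set v : Fin (e+1) → ℝ := fun j => G j (Fin.last p) with hv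
  set T := Tmat v i with hT
  have hcol : ∀ j, (T * G.submatrix id g) j (Fin.last e)
      = (Pi.single i (1:ℝ) : Fin (e+1) → ℝ) j := by
    intro j
    rw [Matrix.mul_apply]
    have h1 : ∀ m, T j m * (G.submatrix id g) m (Fin.last e) = T j m * v m := by
      intro m; rw [Matrix.submatrix_apply, hg_last]; rfl
    rw [Finset.sum_congr rfl fun m _ => h1 m]
    have h2 : ∑ m, T j m * v m = (T.mulVec v) j := rfl
    rw [h2, hT, Tmat_mulVec v i hvi]
  have habs2 : |(T * G.submatrix id g).det|
      = |((T * G.submatrix id g).submatrix i.succAbove Fin.castSucc).det| :=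
    absdet_col_single i _ hcol
  have hsubeq : (T * G.submatrix id g).submatrix i.succAbove Fin.castSucc
      = ((T * G.submatrix id Fin.castSucc).submatrix i.succAbove id).submatrix id
          (J'.orderEmbOfFin hc) := by
    ext a b
    rw [Matrix.submatrix_apply, Matrix.submatrix_apply, Matrix.submatrix_apply,
      Matrix.mul_apply, Matrix.mul_apply]
    refine Finset.sum_congr rfl fun m _ => ?_
    rw [Matrix.submatrix_apply, Matrix.submatrix_apply, hg_cs]
    rfl
  have h3 : |(G.submatrix id g).det| = |v i| * |(T * G.submatrix id g).det| := by
    rw [Matrix.det_mul, abs_mul, hT, det_Tmat v i hvi, abs_inv]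
    field_simp
    exact (mul_div_cancel_right₀ _ (abs_ne_zero.2 hvi)).symm
  rw [habs1, h3, habs2, hsubeq]

lemma main_cube (p : ℕ) : ∀ (d : ℕ) (G : Matrix (Fin d) (Fin p) ℝ),
    volume (G.mulVec '' cube p)
      = ∑ J : Finset (Fin p), if h : J.card = d then
          ENNReal.ofReal |(G.submatrix id (J.orderEmbOfFin h)).det| else 0 := by
  induction p with
  | zero =>
    intro d G
    cases d with
    | zero => rw [vol_d0 _ ((cube_nonempty 0).image _), sum_d0 G]
    | succ e =>
      have himg : G.mulVec '' cube 0 = {G.mulVec 0} := by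
        ext x
        constructor
        · rintro ⟨lam, _, rfl⟩
          rw [Set.mem_singleton_iff, Subsingleton.elim lam 0]
        · rintro rfl
          obtain ⟨z, hz⟩ := cube_nonempty 0
          exact ⟨0, by rwa [Subsingleton.elim (0 : Fin 0 → ℝ) z], rfl⟩
      rw [himg]
      have hsingle : volume ({G.mulVec 0} : Set (Fin (e+1) → ℝ)) = 0 := by
        have h1 : ({G.mulVec 0} : Set (Fin (e+1) → ℝ))
            = Set.univ.pi (fun j => {G.mulVec 0 j}) := by
          ext x
          simp [Set.mem_pi, funext_iff]
        rw [h1, volume_pi_pi]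
        simp
      rw [hsingle]
      symm
      refine Finset.sum_eq_zero fun J _ => ?_
      rw [dif_neg]
      have h2 : J.card ≤ 0 :=
        le_trans (Finset.card_le_card (Finset.subset_univ J)) (by simp)
      omega
  | succ p IH =>
    intro d G
    cases d with
    | zero => rw [vol_d0 _ ((cube_nonempty (p+1)).image _), sum_d0 G]
    | succ e =>
      have hAconv : Convex ℝ ((G.submatrix id Fin.castSucc).mulVec '' cube p) :=
        (cube_convex p).is_linear_image (mulVec_isLinear _)
      have hAK : IsCompact ((G.submatrix id Fin.castSucc).mulVec '' cube p) :=
        (cube_compact p).image (mulVec_continuous _)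
      rw [image_cube_succ G]
      rw [sum_finset_split p (f := fun J => if h : J.card = e+1 then
          ENNReal.ofReal |(G.submatrix id (J.orderEmbOfFin h)).det| else 0)]
      have hsum1 : (∑ J' : Finset (Fin p), if h : (J'.map Fin.castSuccEmb).card = e+1 then
          ENNReal.ofReal |(G.submatrix id ((J'.map Fin.castSuccEmb).orderEmbOfFin h)).det| else 0)
          = volume ((G.submatrix id Fin.castSucc).mulVec '' cube p) := by
        rw [IH (e+1) (G.submatrix id Fin.castSucc)]
        refine Finset.sum_congr rfl fun J' _ => ?_
        by_cases hc : J'.card = e+1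
        · have hcm : (J'.map Fin.castSuccEmb).card = e+1 := by rw [Finset.card_map]; exact hc
          have hdet : G.submatrix id ((J'.map Fin.castSuccEmb).orderEmbOfFin hcm)
              = (G.submatrix id Fin.castSucc).submatrix id (J'.orderEmbOfFin hc) := by
            ext a b
            rw [Matrix.submatrix_apply, Matrix.submatrix_apply,
              congrFun (orderEmb_map_castSucc J' hc hcm) b]
            rfl
          rw [dif_pos hcm, dif_pos hc, hdet]
        · rw [dif_neg (by rw [Finset.card_map]; exact hc), dif_neg hc]
      rw [hsum1]
      by_cases hv0 : (fun j => G j (Fin.last p)) = (0 : Fin (e+1) → ℝ)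
      · -- degenerate new generator
        have hseg : seg (fun j => G j (Fin.last p)) = ({0} : Set (Fin (e+1) → ℝ)) := by
          rw [seg, hv0]
          rw [show (fun t : ℝ => t • (0 : Fin (e+1) → ℝ)) = fun _ => (0 : Fin (e+1) → ℝ) from
            funext fun t => smul_zero t]
          exact Set.Nonempty.image_const (Set.nonempty_Icc.2 zero_le_one) 0
        have haddz : (G.submatrix id Fin.castSucc).mulVec '' cube p + ({0} : Set (Fin (e+1) → ℝ))
            = (G.submatrix id Fin.castSucc).mulVec '' cube p := by
          ext x
          rw [Set.mem_add]
          constructor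
          · rintro ⟨a, ha, b, hb, rfl⟩
            rw [Set.mem_singleton_iff] at hb
            rw [hb, add_zero]; exact ha
          · intro hx; exact ⟨x, hx, 0, rfl, add_zero x⟩
        have hsum2 : (∑ J' : Finset (Fin p),
            if h : (insert (Fin.last p) (J'.map Fin.castSuccEmb)).card = e+1 then
              ENNReal.ofReal |(G.submatrix id
                ((insert (Fin.last p) (J'.map Fin.castSuccEmb)).orderEmbOfFin h)).det| else 0)
            = 0 := by
          refine Finset.sum_eq_zero fun J' _ => ?_
          by_cases hcJ : (insert (Fin.last p) (J'.map Fin.castSuccEmb)).card = e+1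
          · rw [dif_pos hcJ]
            obtain ⟨k, hk⟩ : ∃ k,
                ((insert (Fin.last p) (J'.map Fin.castSuccEmb)).orderEmbOfFin hcJ) k
                  = Fin.last p := by
              have hr := Finset.range_orderEmbOfFin
                (insert (Fin.last p) (J'.map Fin.castSuccEmb)) hcJ
              have hm : (Fin.last p : Fin (p+1)) ∈ Set.range
                  ⇑((insert (Fin.last p) (J'.map Fin.castSuccEmb)).orderEmbOfFin hcJ) := by
                rw [hr]
                exact_mod_cast Finset.mem_insert_self _ _
              exact hm
            have hdet : (G.submatrix id
                ((insert (Fin.last p) (J'.map Fin.castSuccEmb)).orderEmbOfFin hcJ)).det = 0 := by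
              apply Matrix.det_eq_zero_of_column_eq_zero k
              intro a
              rw [Matrix.submatrix_apply, hk]
              exact congrFun hv0 a
            rw [hdet]
            simp
          · rw [dif_neg hcJ]
        rw [hsum2, add_zero, hseg, haddz]
      · -- nondegenerate generator
        obtain ⟨i, hvi⟩ : ∃ i, G i (Fin.last p) ≠ 0 := by
          by_contra h
          push_neg at h
          exact hv0 (funext fun j => h j)
        have habs : ENNReal.ofReal |G i (Fin.last p)| * ENNReal.ofReal |G i (Fin.last p)|⁻¹
            = 1 := by
          rw [← ENNReal.ofReal_mul (abs_nonneg _), mul_inv_cancel₀ (abs_ne_zero.2 hvi),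
            ENNReal.ofReal_one]
        have hLdet : LinearMap.det (Matrix.toLin' (Tmat (fun j => G j (Fin.last p)) i))
            = (G i (Fin.last p))⁻¹ := by
          rw [LinearMap.det_toLin', det_Tmat _ i hvi]
        have hvol : ∀ S : Set (Fin (e+1) → ℝ),
            volume (⇑(Matrix.toLin' (Tmat (fun j => G j (Fin.last p)) i)) '' S)
              = ENNReal.ofReal |G i (Fin.last p)|⁻¹ * volume S := by
          intro S
          rw [Measure.addHaar_image_linearMap volume _ S, hLdet, abs_inv]
        set L := Matrix.toLin' (Tmat (fun j => G j (Fin.last p)) i) with hL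
        have himgadd : ∀ S1 S2 : Set (Fin (e+1) → ℝ),
            ⇑L '' (S1 + S2) = ⇑L '' S1 + ⇑L '' S2 := by
          intro S1 S2
          ext x
          constructor
          · rintro ⟨y, hy, rfl⟩
            rw [Set.mem_add] at hy
            obtain ⟨a, ha, b, hb, rfl⟩ := hy
            exact Set.mem_add.2 ⟨L a, ⟨a, ha, rfl⟩, L b, ⟨b, hb, rfl⟩, (map_add L a b).symm⟩
          · intro hx
            rw [Set.mem_add] at hx
            obtain ⟨a', ⟨a, ha, rfl⟩, b', ⟨b, hb, rfl⟩, rfl⟩ := hx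
            exact ⟨a + b, Set.mem_add.2 ⟨a, ha, b, hb, rfl⟩, map_add L a b⟩
        have hsegim : ⇑L '' seg (fun j => G j (Fin.last p)) = seg (Pi.single i (1:ℝ)) := by
          rw [seg, seg, ← Set.image_comp]
          have hcm : ⇑L ∘ (fun t : ℝ => t • (fun j => G j (Fin.last p)))
              = fun t : ℝ => t • (Pi.single i (1:ℝ) : Fin (e+1) → ℝ) := by
            funext t
            rw [Function.comp_apply, L.map_smul]
            congr 1
            show Matrix.toLin' (Tmat (fun j => G j (Fin.last p)) i) (fun j => G j (Fin.last p))
              = (Pi.single i (1:ℝ) : Fin (e+1) → ℝ)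
            rw [Matrix.toLin'_apply, Tmat_mulVec _ i hvi]
          rw [hcm]
        have hLA : ⇑L '' ((G.submatrix id Fin.castSucc).mulVec '' cube p)
            = ((Tmat (fun j => G j (Fin.last p)) i) * G.submatrix id Fin.castSucc).mulVec
                '' cube p := by
          rw [← Set.image_comp]
          apply Set.image_congr'
          intro mu
          rw [Function.comp_apply, hL, Matrix.toLin'_apply, Matrix.mulVec_mulVec]
        have hshadow : (fun x => x ∘ i.succAbove) '' (⇑L ''
              ((G.submatrix id Fin.castSucc).mulVec '' cube p))
            = (((Tmat (fun j => G j (Fin.last p)) i) * G.submatrix id Fin.castSucc).submatrix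
                i.succAbove id).mulVec '' cube p := by
          rw [hLA, ← Set.image_comp]
          apply Set.image_congr'
          intro mu
          funext a
          rfl
        have hLAconv : Convex ℝ (⇑L '' ((G.submatrix id Fin.castSucc).mulVec '' cube p)) :=
          hAconv.is_linear_image ⟨fun x y => L.map_add x y, fun c x => L.map_smul c x⟩
        have hLAK : IsCompact (⇑L '' ((G.submatrix id Fin.castSucc).mulVec '' cube p)) :=
          hAK.image (LinearMap.continuous_of_finiteDimensional L)
        have key : volume ((G.submatrix id Fin.castSucc).mulVec '' cube p
              + seg (fun j => G j (Fin.last p)))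
            = volume ((G.submatrix id Fin.castSucc).mulVec '' cube p)
              + ENNReal.ofReal |G i (Fin.last p)|
                * volume ((((Tmat (fun j => G j (Fin.last p)) i)
                    * G.submatrix id Fin.castSucc).submatrix i.succAbove id).mulVec
                      '' cube p) := by
          calc volume ((G.submatrix id Fin.castSucc).mulVec '' cube p
                + seg (fun j => G j (Fin.last p)))
              = ENNReal.ofReal |G i (Fin.last p)|
                  * (ENNReal.ofReal |G i (Fin.last p)|⁻¹
                    * volume ((G.submatrix id Fin.castSucc).mulVec '' cube p
                        + seg (fun j => G j (Fin.last p)))) := by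
                rw [← mul_assoc, habs, one_mul]
            _ = ENNReal.ofReal |G i (Fin.last p)|
                  * volume (⇑L '' ((G.submatrix id Fin.castSucc).mulVec '' cube p
                      + seg (fun j => G j (Fin.last p)))) := by rw [hvol]
            _ = ENNReal.ofReal |G i (Fin.last p)|
                  * (volume (⇑L '' ((G.submatrix id Fin.castSucc).mulVec '' cube p))
                    + volume ((fun x => x ∘ i.succAbove) '' (⇑L ''
                        ((G.submatrix id Fin.castSucc).mulVec '' cube p)))) := by
                rw [himgadd, hsegim, vol_add_seg e i _ hLAconv hLAK]
            _ = ENNReal.ofReal |G i (Fin.last p)|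
                  * (ENNReal.ofReal |G i (Fin.last p)|⁻¹
                    * volume ((G.submatrix id Fin.castSucc).mulVec '' cube p))
                  + ENNReal.ofReal |G i (Fin.last p)|
                    * volume ((fun x => x ∘ i.succAbove) '' (⇑L ''
                        ((G.submatrix id Fin.castSucc).mulVec '' cube p))) := by
                rw [mul_add, hvol]
            _ = volume ((G.submatrix id Fin.castSucc).mulVec '' cube p)
                  + ENNReal.ofReal |G i (Fin.last p)|
                    * volume ((((Tmat (fun j => G j (Fin.last p)) i)
                        * G.submatrix id Fin.castSucc).submatrix i.succAbove id).mulVec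
                          '' cube p) := by
                rw [← mul_assoc, habs, one_mul, hshadow]
        have hsum2 : (∑ J' : Finset (Fin p),
            if h : (insert (Fin.last p) (J'.map Fin.castSuccEmb)).card = e+1 then
              ENNReal.ofReal |(G.submatrix id
                ((insert (Fin.last p) (J'.map Fin.castSuccEmb)).orderEmbOfFin h)).det| else 0)
            = ENNReal.ofReal |G i (Fin.last p)|
              * volume ((((Tmat (fun j => G j (Fin.last p)) i)
                  * G.submatrix id Fin.castSucc).submatrix i.succAbove id).mulVec '' cube p) := by
          rw [IH e (((Tmat (fun j => G j (Fin.last p)) i)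
            * G.submatrix id Fin.castSucc).submatrix i.succAbove id), Finset.mul_sum]
          refine Finset.sum_congr rfl fun J' _ => ?_
          have hcard : (insert (Fin.last p) (J'.map Fin.castSuccEmb)).card = J'.card + 1 := by
            rw [Finset.card_insert_of_notMem (last_not_mem_map J'), Finset.card_map]
          by_cases hc : J'.card = e
          · have hcJ : (insert (Fin.last p) (J'.map Fin.castSuccEmb)).card = e+1 := by
              rw [hcard, hc]
            rw [dif_pos hcJ, dif_pos hc, det_insert_last G i hvi J' hc hcJ,
              ENNReal.ofReal_mul (abs_nonneg _)]
          · rw [dif_neg (by omega : ¬(insert (Fin.last p) (J'.map Fin.castSuccEmb)).card = e+1),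
              dif_neg hc, mul_zero]
        rw [hsum2, key]

end Main

end ZonoAux

open ZonoAux

/-- Equation (2), full-rank case: if `G ∈ ℝ^{d×p}` with `p ≥ d` has rank `d`, then the
Lebesgue measure of `Z(c,G)` equals `2^d · ∑_J |det G^J|`, where `J` ranges over all
`d`-element subsets of the column indices and `G^J` is the corresponding `d×d` submatrix. -/
theorem zonotope_volume_formula (d p : ℕ) (hdp : d ≤ p)
    (G : Matrix (Fin d) (Fin p) ℝ) (hrank : G.rank = d) (c : Fin d → ℝ) :
    volume (zonotope c G)
      = ENNReal.ofReal (2 ^ d *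
          ∑ J : Finset (Fin p), if h : J.card = d then
            |(G.submatrix id (J.orderEmbOfFin h)).det| else 0) := by
  classical
  have himg : zonotope c G
      = (fun x => (c - G.mulVec (fun _ => 1)) + x) '' (((2:ℝ) • G).mulVec '' cube p) := by
    ext x
    constructor
    · rintro ⟨lam, hlam, rfl⟩
      refine ⟨((2:ℝ) • G).mulVec (fun k => (lam k + 1)/2),
        ⟨fun k => (lam k + 1)/2, ?_, rfl⟩, ?_⟩
      · intro k _
        have hk := abs_le.1 (hlam k)
        exact Set.mem_Icc.2 ⟨by linarith [hk.1], by linarith [hk.2]⟩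
      · have hvec : ((2:ℝ) • (fun k => (lam k + 1)/2) : Fin p → ℝ) = lam + fun _ => 1 := by
          funext k
          show (2:ℝ) * ((lam k + 1)/2) = lam k + 1
          ring
        have h1 : ((2:ℝ) • G).mulVec (fun k => (lam k + 1)/2)
            = G.mulVec lam + G.mulVec (fun _ => 1) := by
          rw [Matrix.smul_mulVec, ← Matrix.mulVec_smul, hvec, Matrix.mulVec_add]
        rw [h1]
        funext j
        simp only [Pi.add_apply, Pi.sub_apply]
        ring
    · rintro ⟨_, ⟨mu, hmu, rfl⟩, rfl⟩
      refine ⟨fun k => 2 * mu k - 1, ?_, ?_⟩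
      · intro k
        have hk := Set.mem_Icc.1 (hmu k (Set.mem_univ k))
        show |2 * mu k - 1| ≤ 1
        rw [abs_le]
        exact ⟨by linarith [hk.1], by linarith [hk.2]⟩
      · have hvec : (fun k => 2 * mu k - 1 : Fin p → ℝ) = (2:ℝ) • mu - fun _ => 1 := by
          funext k
          show 2 * mu k - 1 = (2:ℝ) * mu k - 1
          ring
        have h1 : G.mulVec (fun k => 2 * mu k - 1)
            = ((2:ℝ) • G).mulVec mu - G.mulVec (fun _ => 1) := by
          rw [hvec, Matrix.mulVec_sub, Matrix.mulVec_smul, Matrix.smul_mulVec]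
        rw [h1]
        funext j
        simp only [Pi.add_apply, Pi.sub_apply]
        ring
  rw [himg]
  have htrans : volume ((fun x => (c - G.mulVec (fun _ => 1)) + x)
      '' (((2:ℝ) • G).mulVec '' cube p)) = volume (((2:ℝ) • G).mulVec '' cube p) := by
    have hpre : (fun x => (c - G.mulVec (fun _ => 1)) + x) '' (((2:ℝ) • G).mulVec '' cube p)
        = (fun x => -(c - G.mulVec (fun _ => 1)) + x) ⁻¹' (((2:ℝ) • G).mulVec '' cube p) := by
      ext x
      constructor
      · rintro ⟨y, hy, rfl⟩
        rwa [Set.mem_preimage, neg_add_cancel_left]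
      · intro hx
        exact ⟨-(c - G.mulVec (fun _ => 1)) + x, hx, add_neg_cancel_left _ _⟩
    rw [hpre, measure_preimage_add]
  rw [htrans, main_cube p d ((2:ℝ) • G)]
  have hterm : ∀ (J : Finset (Fin p)) (h : J.card = d),
      |(((2:ℝ) • G).submatrix id (J.orderEmbOfFin h)).det|
        = 2 ^ d * |(G.submatrix id (J.orderEmbOfFin h)).det| := by
    intro J h
    have hs : ((2:ℝ) • G).submatrix id (J.orderEmbOfFin h)
        = (2:ℝ) • (G.submatrix id (J.orderEmbOfFin h)) := by
      ext a b; rfl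
    rw [hs, Matrix.det_smul, abs_mul, abs_pow, Fintype.card_fin]
    norm_num
  rw [ENNReal.ofReal_mul (by positivity),
    ENNReal.ofReal_sum_of_nonneg (fun J _ => by
      by_cases h : J.card = d
      · rw [dif_pos h]; exact abs_nonneg _
      · rw [dif_neg h]),
    Finset.mul_sum]
  refine Finset.sum_congr rfl fun J _ => ?_
  by_cases h : J.card = d
  · rw [dif_pos h, dif_pos h, ← ENNReal.ofReal_mul (by positivity), ← hterm J h]
  · rw [dif_neg h, dif_neg h, ENNReal.ofReal_zero, mul_zero]
end
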